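/- arXiv:2412.12786 — 5 statements merged into one kernel-verified Lean document; each statement's English description precedes it below -/
import Mathlib

section
/- Let M be a matching with a separated layout and suppose that the largest ⋄-pattern contained in M has size k×k (that is, M contains a k-⋄-pattern but no (k+1)-⋄-pattern). Then the mixed page number of M satisfies k ≤ mn(M) ≤ 2k. -/
/-!
Common framework: ordered graphs on vertex set `Fin n` (the vertex order is the
order of `Fin n`), with edges encoded as pairs `(u, v)` with `u < v`.
-/

namespace MixedLayouts

/-- An ordered graph: vertices `Fin n` (with their natural linear order),
edges given as ordered pairs `(u, v)` with `u < v`. -/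
structure OGraph where
  n : ℕ
  E : Finset (Fin n × Fin n)
  lt_of_mem : ∀ e ∈ E, e.1 < e.2

/-- Two edges `e = uv`, `f = xy` cross: `u ≺ x ≺ v ≺ y` (or symmetrically). -/
def Cross {n : ℕ} (e f : Fin n × Fin n) : Prop :=
  (e.1 < f.1 ∧ f.1 < e.2 ∧ e.2 < f.2) ∨ (f.1 < e.1 ∧ e.1 < f.2 ∧ f.2 < e.2)

/-- Two edges `e = uv`, `f = xy` nest: `u ≺ x ≺ y ≺ v` (or symmetrically). -/
def Nest {n : ℕ} (e f : Fin n × Fin n) : Prop :=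
  (e.1 < f.1 ∧ f.2 < e.2) ∨ (f.1 < e.1 ∧ e.2 < f.2)

/-- `e ↗ f`: both endpoints increase (for separated layouts this is crossing). -/
def Up {n : ℕ} (e f : Fin n × Fin n) : Prop := e.1 < f.1 ∧ e.2 < f.2

/-- `e ↘ f`: first endpoint increases, second decreases
(for separated layouts this means `f` nests inside `e`). -/
def Down {n : ℕ} (e f : Fin n × Fin n) : Prop := e.1 < f.1 ∧ f.2 < e.2

namespace OGraph

/-- Degree of a vertex. -/
def degree (G : OGraph) (v : Fin G.n) : ℕ :=
  (G.E.filter fun e => e.1 = v ∨ e.2 = v).card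

/-- An ordered matching: every vertex has degree exactly one. -/
def IsMatching (G : OGraph) : Prop := ∀ v : Fin G.n, G.degree v = 1

/-- A separated layout of a bipartite ordered graph: there is a threshold `t`
such that every edge goes from a vertex before `t` to a vertex from `t` on. -/
def Separated (G : OGraph) : Prop :=
  ∃ t : ℕ, ∀ e ∈ G.E, (e.1 : ℕ) < t ∧ t ≤ (e.2 : ℕ)

/-- An `s`-stack `q`-queue layout: a partition of the edges into `s` stacks
(pages `0, …, s-1`, pairwise non-crossing) and `q` queues
(pages `s, …, s+q-1`, pairwise non-nesting). -/
def HasLayout (G : OGraph) (s q : ℕ) : Prop :=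
  ∃ c : Fin G.n × Fin G.n → ℕ,
    (∀ e ∈ G.E, c e < s + q) ∧
    ∀ e ∈ G.E, ∀ f ∈ G.E, c e = c f →
      (c e < s → ¬ Cross e f) ∧ (s ≤ c e → ¬ Nest e f)

/-- The mixed page number: the minimum of `s + q` over all
`s`-stack `q`-queue layouts. -/
noncomputable def mn (G : OGraph) : ℕ :=
  sInf {m | ∃ s q, s + q = m ∧ G.HasLayout s q}

/-- A `t`-thick `k`-twist: `k` groups of `t` edges each, edges within a group
pairwise nest, edges from different groups pairwise cross. -/
def HasThickTwist (G : OGraph) (k t : ℕ) : Prop :=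
  ∃ e : Fin k → Fin t → Fin G.n × Fin G.n,
    (∀ i j, e i j ∈ G.E) ∧
    (Function.Injective fun p : Fin k × Fin t => e p.1 p.2) ∧
    (∀ i : Fin k, ∀ j j' : Fin t, j ≠ j' → Nest (e i j) (e i j')) ∧
    (∀ i i' : Fin k, ∀ j j' : Fin t, i ≠ i' → Cross (e i j) (e i' j'))

/-- A `t`-thick `k`-rainbow: `k` groups of `t` edges each, edges within a group
pairwise cross, edges from different groups pairwise nest. -/
def HasThickRainbow (G : OGraph) (k t : ℕ) : Prop :=
  ∃ e : Fin k → Fin t → Fin G.n × Fin G.n,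
    (∀ i j, e i j ∈ G.E) ∧
    (Function.Injective fun p : Fin k × Fin t => e p.1 p.2) ∧
    (∀ i : Fin k, ∀ j j' : Fin t, j ≠ j' → Cross (e i j) (e i j')) ∧
    (∀ i i' : Fin k, ∀ j j' : Fin t, i ≠ i' → Nest (e i j) (e i' j'))

/-- A `k`-thick pattern: a `k`-thick `k`-twist or a `k`-thick `k`-rainbow. -/
def HasThickPattern (G : OGraph) (k : ℕ) : Prop :=
  G.HasThickTwist k k ∨ G.HasThickRainbow k k

/-- `G` contains a `k`-⋄-pattern: `k²` edges `e i j` with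
`e i j ↗ e i j'` for `j < j'` and `e i j ↘ e i' j` for `i < i'`. -/
def HasDiamond (G : OGraph) (k : ℕ) : Prop :=
  ∃ e : Fin k → Fin k → Fin G.n × Fin G.n,
    (∀ i j, e i j ∈ G.E) ∧
    (Function.Injective fun p : Fin k × Fin k => e p.1 p.2) ∧
    (∀ i : Fin k, ∀ j j' : Fin k, j < j' → Up (e i j) (e i j')) ∧
    (∀ j : Fin k, ∀ i i' : Fin k, i < i' → Down (e i j) (e i' j))

/-- The edge set of `G` is exactly a `k`-⋄-pattern. -/
def FormsDiamond (G : OGraph) (k : ℕ) : Prop :=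
  ∃ e : Fin k → Fin k → Fin G.n × Fin G.n,
    (Function.Injective fun p : Fin k × Fin k => e p.1 p.2) ∧
    (∀ i : Fin k, ∀ j j' : Fin k, j < j' → Up (e i j) (e i j')) ∧
    (∀ j : Fin k, ∀ i i' : Fin k, i < i' → Down (e i j) (e i' j)) ∧
    G.E = Finset.image (fun p : Fin k × Fin k => e p.1 p.2) Finset.univ

/-- Delete an edge. -/
def erase (G : OGraph) (e : Fin G.n × Fin G.n) : OGraph :=
  ⟨G.n, G.E.erase e, fun f hf => G.lt_of_mem f (Finset.mem_of_mem_erase hf)⟩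

/-- `(s,q)`-critical: no `s`-stack `q`-queue layout, but every one-edge-deleted
subgraph has one. -/
def IsSQCritical (G : OGraph) (s q : ℕ) : Prop :=
  ¬ G.HasLayout s q ∧ ∀ e ∈ G.E, (G.erase e).HasLayout s q

/-- `k`-critical: `mn G > k`, but `mn (G - e) ≤ k` for every edge `e`. -/
def IsKCritical (G : OGraph) (k : ℕ) : Prop :=
  k < G.mn ∧ ∀ e ∈ G.E, (G.erase e).mn ≤ k

end OGraph

/-- An ordered graph `G` contains the pattern `H`: an order-preserving injection
of the vertices mapping edges to edges. -/
def Contains (G H : OGraph) : Prop :=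
  ∃ φ : Fin H.n → Fin G.n, StrictMono φ ∧ ∀ e ∈ H.E, (φ e.1, φ e.2) ∈ G.E

/-- A chain of the poset `P(M)` of a separated matching
(elements: edges; order: `↗`). -/
def IsPChain {n : ℕ} (C : Finset (Fin n × Fin n)) : Prop :=
  ∀ e ∈ C, ∀ f ∈ C, e ≠ f → Up e f ∨ Up f e

/-- An antichain of the poset `P(M)` of a separated matching. -/
def IsPAntichain {n : ℕ} (C : Finset (Fin n × Fin n)) : Prop :=
  ∀ e ∈ C, ∀ f ∈ C, e ≠ f → ¬ Up e f ∧ ¬ Up f e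

/-- `c_i` for an abstract finite poset: the maximum number of elements
covered by `i` chains. -/
noncomputable def chainCover (α : Type) [Fintype α] [PartialOrder α] [DecidableEq α]
    (i : ℕ) : ℕ :=
  sSup {m | ∃ C : Fin i → Finset α,
    (∀ j, IsChain (· ≤ ·) (C j : Set α)) ∧ (Finset.univ.biUnion C).card = m}

/-- `a_i` for an abstract finite poset: the maximum number of elements
covered by `i` antichains. -/
noncomputable def antichainCover (α : Type) [Fintype α] [PartialOrder α] [DecidableEq α]
    (i : ℕ) : ℕ :=
  sSup {m | ∃ A : Fin i → Finset α,
    (∀ j, IsAntichain (· ≤ ·) (A j : Set α)) ∧ (Finset.univ.biUnion A).card = m}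

end MixedLayouts

/-!
In a separated layout, `↗`-related edges cross and `↘`-related edges nest. Hence a stack takes at
most one edge from each row of a `k`-⋄-pattern and a queue at most one from each column, which
gives `k² ≤ (s + q) k`.

For the upper bound take a largest set `A` of edges without `↘`-chains of length `k + 1`. By
Mirsky's theorem `A` splits into `k` queues, and the remaining edges split into `k` stacks unless
they contain a `↗`-chain `Q` of length `k + 1`. As `A ∪ Q` has `k + 1` edges more than `A`,
maximality of `A` means that no `k` edges meet all its `↘`-chains of length `k + 1`. In a matching
these longest chains are comparable position by position, so they form a lattice under pointwise
max and min, and a Dilworth-type argument on this lattice yields `k + 1` of them increasing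
strictly at every position: a `(k + 1)`-⋄-pattern.
-/

namespace MixedLayouts

section Chains

variable {α : Type*} {r : α → α → Prop} {S T : Set α} {m : ℕ}

def IsChainIn (r : α → α → Prop) (S : Set α) {m : ℕ} (g : Fin m → α) : Prop :=
  (∀ i, g i ∈ S) ∧ ∀ i j, i < j → r (g i) (g j)

def HasChain (r : α → α → Prop) (S : Set α) (m : ℕ) : Prop :=
  ∃ g : Fin m → α, IsChainIn r S g

theorem IsChainIn.mono {g : Fin m → α} (hg : IsChainIn r S g) (hST : S ⊆ T) :
    IsChainIn r T g :=
  ⟨fun i => hST (hg.1 i), hg.2⟩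

theorem IsChainIn.injective [Std.Irrefl r] {g : Fin m → α} (hg : IsChainIn r S g) :
    Function.Injective g := by
  intro i j hij
  by_contra hne
  rcases lt_or_gt_of_ne hne with h | h
  · exact irrefl _ (hij ▸ hg.2 i j h)
  · exact irrefl _ (hij ▸ hg.2 j i h)

theorem IsChainIn.cons [IsTrans α r] {g : Fin (m + 1) → α} (hg : IsChainIn r S g) {a : α}
    (ha : a ∈ S) (hag : r a (g 0)) : IsChainIn r S (Fin.cons a g : Fin (m + 2) → α) := by
  refine ⟨Fin.cases ha hg.1, fun i j hij => ?_⟩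
  induction j using Fin.cases with
  | zero => exact absurd hij (Fin.not_lt_zero i)
  | succ j =>
    induction i using Fin.cases with
    | zero =>
      rcases (Fin.zero_le j).eq_or_lt with h | h
      · simpa [← h] using hag
      · simpa using _root_.trans hag (hg.2 _ _ h)
    | succ i => simpa using hg.2 _ _ (Fin.succ_lt_succ_iff.mp hij)

theorem IsChainIn.rel_of_le [IsTrans α r] {g : Fin m → α} (hg : IsChainIn r S g) {i j : Fin m}
    (hij : i ≤ j) {a : α} (h : r (g j) a) : r (g i) a := by
  rcases hij.eq_or_lt with rfl | hlt
  · exact h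
  · exact _root_.trans (hg.2 _ _ hlt) h

theorem IsChainIn.rel_of_ge [IsTrans α r] {g : Fin m → α} (hg : IsChainIn r S g) {i j : Fin m}
    (hij : i ≤ j) {a : α} (h : r a (g i)) : r a (g j) := by
  rcases hij.eq_or_lt with rfl | hlt
  · exact h
  · exact _root_.trans h (hg.2 _ _ hlt)

/-- Follow `X` up to position `i`, then jump to `Y` at the same position. -/
theorem IsChainIn.hasChain_succ_of_rel [IsTrans α r] {X Y : Fin m → α} (hX : IsChainIn r S X)
    (hY : IsChainIn r S Y) (i : Fin m) (h : r (X i) (Y i)) : HasChain r S (m + 1) := by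
  refine ⟨fun l => if hl : (l : ℕ) ≤ i then X ⟨l, by omega⟩ else Y ⟨l - 1, by omega⟩,
    fun l => ?_, fun a b hab => ?_⟩
  · dsimp only
    split
    exacts [hX.1 _, hY.1 _]
  · have hab : (a : ℕ) < b := hab
    dsimp only
    split_ifs with ha hb hb
    · exact hX.2 _ _ (Fin.mk_lt_mk.mpr hab)
    · exact hX.rel_of_le (Fin.mk_le_mk.mpr ha : _ ≤ (⟨i, i.isLt⟩ : Fin m))
        (hY.rel_of_ge (Fin.mk_le_mk.mpr (by omega) : (⟨i, i.isLt⟩ : Fin m) ≤ _) h)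
    · omega
    · exact hY.2 _ _ (Fin.mk_lt_mk.mpr (by omega))

/-- An antichain `Q` meets a chain at most once; drop that element. -/
theorem not_hasChain_union_of_isAntichain [Std.Irrefl r] {A Q : Set α}
    (hA : ¬ HasChain r A (m + 1)) (hQ : IsAntichain r Q) : ¬ HasChain r (A ∪ Q) (m + 2) := by
  rintro ⟨g, hg⟩
  obtain ⟨l, hl⟩ : ∃ l, ∀ j ≠ l, g j ∈ A := by
    by_cases hmeet : ∃ l, g l ∈ Q
    · obtain ⟨l, hl⟩ := hmeet
      refine ⟨l, fun j hj => (hg.1 j).resolve_right fun hjQ => ?_⟩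
      rcases lt_or_gt_of_ne hj with h | h
      · exact hQ hjQ hl (hg.injective.ne hj) (hg.2 _ _ h)
      · exact hQ hl hjQ (hg.injective.ne hj.symm) (hg.2 _ _ h)
    · exact ⟨0, fun j _ => (hg.1 j).resolve_right fun hjQ => hmeet ⟨j, hjQ⟩⟩
  exact hA ⟨g ∘ l.succAbove, fun i => hl _ (l.succAbove_ne i),
    fun _ _ h => hg.2 _ _ (Fin.strictMono_succAbove l h)⟩

/-- Mirsky's theorem. -/
theorem exists_coloring_of_not_hasChain [IsTrans α r] (hS : ¬ HasChain r S (m + 1)) :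
    ∃ c : α → ℕ, (∀ a ∈ S, c a < m) ∧ ∀ a ∈ S, ∀ b ∈ S, r a b → c a < c b := by
  classical
  induction m generalizing S with
  | zero =>
    have hS : S = ∅ := Set.eq_empty_of_forall_notMem fun a ha =>
      hS ⟨fun _ => a, fun _ => ha, fun i j hij => by omega⟩
    subst hS
    exact ⟨0, by simp, by simp⟩
  | succ m ih =>
    -- The non-minimal elements carry no chain of length `m + 1`: prepend a predecessor.
    obtain ⟨c, hc_lt, hc_rel⟩ := ih (S := {b ∈ S | ∃ a ∈ S, r a b}) fun ⟨g, hg⟩ => by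
      obtain ⟨a, ha, hag⟩ := (hg.1 0).2
      exact hS ⟨_, (hg.mono fun _ h => h.1).cons ha hag⟩
    refine ⟨fun b => if b ∈ {b ∈ S | ∃ a ∈ S, r a b} then c b + 1 else 0,
      fun b hb => ?_, fun a ha b hb hab => ?_⟩
    · dsimp only
      split_ifs with h
      exacts [Nat.succ_lt_succ (hc_lt b h), Nat.succ_pos m]
    · have hb' : b ∈ {b ∈ S | ∃ a ∈ S, r a b} := ⟨hb, a, ha, hab⟩
      dsimp only
      rw [if_pos hb']
      split_ifs with ha'
      exacts [Nat.succ_lt_succ (hc_rel a ha' b hb' hab), Nat.succ_pos _]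

end Chains

theorem sup_eq_left_or_right {β : Type*} [SemilatticeSup β] {a b : β} (h : a ≤ b ∨ b ≤ a) :
    a ⊔ b = a ∨ a ⊔ b = b :=
  h.elim (fun h => Or.inr (sup_of_le_right h)) (fun h => Or.inl (sup_of_le_left h))

theorem inf_eq_left_or_right {β : Type*} [SemilatticeInf β] {a b : β} (h : a ≤ b ∨ b ≤ a) :
    a ⊓ b = a ∨ a ⊓ b = b :=
  h.elim (fun h => Or.inl (inf_of_le_left h)) (fun h => Or.inr (inf_of_le_right h))

section Hitting

variable {ι β : Type*} [Lattice β]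

structure IsComparableSublattice (R : Finset (ι → β)) : Prop where
  sup_mem : ∀ X ∈ R, ∀ Y ∈ R, X ⊔ Y ∈ R
  inf_mem : ∀ X ∈ R, ∀ Y ∈ R, X ⊓ Y ∈ R
  le_or_le : ∀ X ∈ R, ∀ Y ∈ R, ∀ i, X i ≤ Y i ∨ Y i ≤ X i

namespace IsComparableSublattice

variable {R : Finset (ι → β)}

theorem filter_forall (hR : IsComparableSublattice R) (p : ι → β → Prop)
    [DecidablePred fun X : ι → β => ∀ i, p i (X i)] :
    IsComparableSublattice (R.filter fun X => ∀ i, p i (X i)) := by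
  refine ⟨fun X hX Y hY => ?_, fun X hX Y hY => ?_, fun X hX Y hY =>
    hR.le_or_le X (Finset.mem_filter.mp hX).1 Y (Finset.mem_filter.mp hY).1⟩ <;>
    rw [Finset.mem_filter] at hX hY ⊢
  · refine ⟨hR.sup_mem X hX.1 Y hY.1, fun i => ?_⟩
    rcases sup_eq_left_or_right (hR.le_or_le X hX.1 Y hY.1 i) with h | h
    · exact (congrArg (p i) h).mpr (hX.2 i)
    · exact (congrArg (p i) h).mpr (hY.2 i)
  · refine ⟨hR.inf_mem X hX.1 Y hY.1, fun i => ?_⟩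
    rcases inf_eq_left_or_right (hR.le_or_le X hX.1 Y hY.1 i) with h | h
    · exact (congrArg (p i) h).mpr (hX.2 i)
    · exact (congrArg (p i) h).mpr (hY.2 i)

/-- Induction on `s`, with `b` the least member: the members strictly above `b` everywhere carry
no chain of length `s`, so some `D` of size `s - 1` hits them. The greatest member `J` avoiding
`D` is not strictly above `b`, so `J i₀ = b i₀` for some `i₀`, and every member avoiding `D` is
squeezed to the value `b i₀` at `i₀`. -/
theorem exists_hitting_finset (hR : IsComparableSublattice R) (s : ℕ)
    (hs : ¬ HasChain StrongLT (R : Set (ι → β)) (s + 1)) :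
    ∃ D : Finset β, D.card ≤ s ∧ ∀ X ∈ R, ∃ i, X i ∈ D := by
  classical
  have : IsTrans (ι → β) StrongLT := ⟨fun _ _ _ h h' i => (h i).trans (h' i)⟩
  induction s generalizing R with
  | zero =>
    exact ⟨∅, le_rfl, fun X hX => (hs ⟨fun _ => X, fun _ => hX, fun i j hij => by omega⟩).elim⟩
  | succ s ih =>
    rcases R.eq_empty_or_nonempty with rfl | hne
    · exact ⟨∅, by simp, by simp⟩
    set b := R.inf' hne id
    have hb : b ∈ R := Finset.inf'_mem (R : Set _) hR.inf_mem R hne id fun X hX => hX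
    have hbX : ∀ X ∈ R, b ≤ X := fun X hX => Finset.inf'_le id hX
    obtain ⟨D, hDcard, hD⟩ := ih (R := R.filter fun X => ∀ i, b i < X i)
      (hR.filter_forall fun i x => b i < x) fun ⟨g, hg⟩ =>
        hs ⟨_, (hg.mono fun X hX => (Finset.mem_filter.mp hX).1).cons hb
          (Finset.mem_filter.mp (hg.1 0)).2⟩
    set U := R.filter fun X => ∀ i, X i ∉ D
    rcases U.eq_empty_or_nonempty with hU | hU
    · refine ⟨D, by omega, fun X hX => ?_⟩
      by_contra! h
      exact Finset.eq_empty_iff_forall_notMem.mp hU X (Finset.mem_filter.mpr ⟨hX, h⟩)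
    set J := U.sup' hU id
    have hJ : J ∈ U :=
      Finset.sup'_mem (U : Set _) (hR.filter_forall fun _ x => x ∉ D).sup_mem U hU id
        fun X hX => hX
    have hXJ : ∀ X ∈ U, X ≤ J := fun X hX => Finset.le_sup' id hX
    obtain ⟨i₀, hi₀⟩ : ∃ i, b i = J i := by
      by_contra! h
      obtain ⟨i, hi⟩ := hD J (Finset.mem_filter.mpr
        ⟨(Finset.mem_filter.mp hJ).1, fun i => (hbX J (Finset.mem_filter.mp hJ).1 i).lt_of_ne (h i)⟩)
      exact (Finset.mem_filter.mp hJ).2 i hi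
    refine ⟨insert (b i₀) D, (Finset.card_insert_le _ _).trans (by omega), fun X hX => ?_⟩
    by_cases hXD : ∃ i, X i ∈ D
    · obtain ⟨i, hi⟩ := hXD
      exact ⟨i, Finset.mem_insert_of_mem hi⟩
    · push Not at hXD
      have hXU : X ∈ U := Finset.mem_filter.mpr ⟨hX, hXD⟩
      exact ⟨i₀, Finset.mem_insert.mpr
        (Or.inl (le_antisymm ((hXJ X hXU i₀).trans hi₀.ge) (hbX X hX i₀)))⟩

end IsComparableSublattice

end Hitting

section Edges

variable {n w : ℕ} {a b c d e f : Fin n × Fin n}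

instance : IsTrans (Fin n × Fin n) Up := ⟨fun _ _ _ h h' => ⟨h.1.trans h'.1, h.2.trans h'.2⟩⟩

instance : Std.Irrefl (Up (n := n)) := ⟨fun _ h => lt_irrefl _ h.1⟩

instance : IsTrans (Fin n × Fin n) Down := ⟨fun _ _ _ h h' => ⟨h.1.trans h'.1, h'.2.trans h.2⟩⟩

instance : Std.Irrefl (Down (n := n)) := ⟨fun _ h => lt_irrefl _ h.1⟩

theorem Up.le (h : Up e f) : e ≤ f := ⟨h.1.le, h.2.le⟩

theorem Up.not_down (h : Up e f) : ¬ Down e f := fun h' => lt_asymm h.2 h'.2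

theorem Up.not_down_symm (h : Up e f) : ¬ Down f e := fun h' => lt_asymm h.1 h'.1

theorem Cross.up_or_up (h : Cross e f) : Up e f ∨ Up f e := by
  rcases h with ⟨h1, -, h3⟩ | ⟨h1, -, h3⟩
  exacts [Or.inl ⟨h1, h3⟩, Or.inr ⟨h1, h3⟩]

theorem Down.sup (h : Down a b) (h' : Down c d) : Down (a ⊔ c) (b ⊔ d) :=
  ⟨max_lt_max h.1 h'.1, max_lt_max h.2 h'.2⟩

theorem Down.inf (h : Down a b) (h' : Down c d) : Down (a ⊓ c) (b ⊓ d) :=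
  ⟨min_lt_min h.1 h'.1, min_lt_min h.2 h'.2⟩

variable {P : Set (Fin n × Fin n)} {X Y : Fin w → Fin n × Fin n}

theorem IsChainIn.down_sup (hX : IsChainIn Down P X) (hY : IsChainIn Down P Y)
    (hXY : ∀ i, X i ≤ Y i ∨ Y i ≤ X i) : IsChainIn Down P (X ⊔ Y) := by
  refine ⟨fun i => ?_, fun i j h => (hX.2 i j h).sup (hY.2 i j h)⟩
  rcases sup_eq_left_or_right (hXY i) with h | h
  · exact (congrArg (· ∈ P) h).mpr (hX.1 i)
  · exact (congrArg (· ∈ P) h).mpr (hY.1 i)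

theorem IsChainIn.down_inf (hX : IsChainIn Down P X) (hY : IsChainIn Down P Y)
    (hXY : ∀ i, X i ≤ Y i ∨ Y i ≤ X i) : IsChainIn Down P (X ⊓ Y) := by
  refine ⟨fun i => ?_, fun i j h => (hX.2 i j h).inf (hY.2 i j h)⟩
  rcases inf_eq_left_or_right (hXY i) with h | h
  · exact (congrArg (· ∈ P) h).mpr (hX.1 i)
  · exact (congrArg (· ∈ P) h).mpr (hY.1 i)

end Edges

namespace OGraph

variable {G : OGraph} {s q k w : ℕ} {e f : Fin G.n × Fin G.n}

theorem hasLayout_of_not_hasChain (A : Finset (Fin G.n × Fin G.n))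
    (hA : ¬ HasChain Down (A : Set (Fin G.n × Fin G.n)) (q + 1))
    (hB : ¬ HasChain Up ((G.E \ A : Finset _) : Set (Fin G.n × Fin G.n)) (s + 1)) :
    G.HasLayout s q := by
  classical
  obtain ⟨cA, hcA_lt, hcA_rel⟩ := exists_coloring_of_not_hasChain hA
  obtain ⟨cB, hcB_lt, hcB_rel⟩ := exists_coloring_of_not_hasChain hB
  have memB {e} (he : e ∈ G.E) (heA : e ∉ A) : e ∈ G.E \ A :=
    Finset.mem_sdiff.mpr ⟨he, heA⟩
  refine ⟨fun e => if e ∈ A then s + cA e else cB e, fun e he => ?_, fun e he f hf hef => ?_⟩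
  · dsimp only
    split_ifs with heA
    · have := hcA_lt e heA; omega
    · have := hcB_lt e (memB he heA); omega
  · dsimp only at hef ⊢
    split_ifs at hef ⊢ with heA hfA hfA
    · refine ⟨by omega, fun _ hnest => ?_⟩
      rcases hnest with h | h
      · have := hcA_rel e heA f hfA h; omega
      · have := hcA_rel f hfA e heA h; omega
    · have := hcB_lt f (memB hf hfA); omega
    · have := hcB_lt e (memB he heA); omega
    · refine ⟨fun _ hcross => ?_, fun h => absurd h (not_le.mpr (hcB_lt e (memB he heA)))⟩
      rcases hcross.up_or_up with h | h
      · have := hcB_rel e (memB he heA) f (memB hf hfA) h; omega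
      · have := hcB_rel f (memB hf hfA) e (memB he heA) h; omega

theorem Separated.cross_of_up (hsep : G.Separated) (he : e ∈ G.E) (hf : f ∈ G.E) (h : Up e f) : Cross e f := by
  obtain ⟨t, ht⟩ := hsep
  have := (ht f hf).1
  have := (ht e he).2
  exact Or.inl ⟨h.1, Fin.lt_def.mpr (by omega), h.2⟩

theorem Separated.le_add_of_hasDiamond (hsep : G.Separated) (hD : G.HasDiamond k)
    (hL : G.HasLayout s q) : k ≤ s + q := by
  obtain ⟨e, hmem, -, hrow, hcol⟩ := hD
  obtain ⟨c, hc_lt, hc⟩ := hL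
  have stack_row (i j j') (hpage : c (e i j) = c (e i j')) (hs : c (e i j) < s) : j = j' := by
    by_contra hne
    rcases lt_or_gt_of_ne hne with h | h
    · exact (hc _ (hmem i j) _ (hmem i j') hpage).1 hs
        (hsep.cross_of_up (hmem i j) (hmem i j') (hrow i j j' h))
    · exact (hc _ (hmem i j') _ (hmem i j) hpage.symm).1 (hpage ▸ hs)
        (hsep.cross_of_up (hmem i j') (hmem i j) (hrow i j' j h))
  have queue_col (j i i') (hpage : c (e i j) = c (e i' j)) (hq : s ≤ c (e i j)) : i = i' := by
    by_contra hne
    rcases lt_or_gt_of_ne hne with h | h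
    · exact (hc _ (hmem i j) _ (hmem i' j) hpage).2 hq (Or.inl (hcol j i i' h))
    · exact (hc _ (hmem i' j) _ (hmem i j) hpage.symm).2 (hpage ▸ hq) (Or.inl (hcol j i' i h))
  let F : Fin k × Fin k → Fin (s + q) × Fin k := fun p =>
    (⟨c (e p.1 p.2), hc_lt _ (hmem _ _)⟩, if c (e p.1 p.2) < s then p.1 else p.2)
  have hF : Function.Injective F := by
    rintro ⟨i, j⟩ ⟨i', j'⟩ h
    simp only [F, Prod.mk.injEq, Fin.mk.injEq] at h
    obtain ⟨hpage, hidx⟩ := h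
    by_cases hs : c (e i j) < s
    · rw [if_pos hs, if_pos (hpage ▸ hs)] at hidx
      subst hidx
      rw [stack_row i j j' hpage hs]
    · rw [if_neg hs, if_neg (hpage ▸ hs)] at hidx
      subst hidx
      rw [queue_col j i i' hpage (not_lt.mp hs)]
  rcases Nat.eq_zero_or_pos k with rfl | hk
  · exact Nat.zero_le _
  · have := Fintype.card_le_of_injective F hF
    simp only [Fintype.card_prod, Fintype.card_fin] at this
    exact Nat.le_of_mul_le_mul_right this hk

theorem mn_le (hL : G.HasLayout s q) : G.mn ≤ s + q :=
  Nat.sInf_le ⟨s, q, rfl, hL⟩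

theorem exists_hasLayout_mn (hL : G.HasLayout s q) : ∃ s' q', s' + q' = G.mn ∧ G.HasLayout s' q' :=
  Nat.sInf_mem (s := {m | ∃ s q, s + q = m ∧ G.HasLayout s q}) ⟨s + q, s, q, rfl, hL⟩

theorem IsMatching.eq_of_incident (hm : G.IsMatching) (he : e ∈ G.E) (hf : f ∈ G.E)
    {v : Fin G.n} (hev : e.1 = v ∨ e.2 = v) (hfv : f.1 = v ∨ f.2 = v) : e = f :=
  Finset.card_le_one.mp (hm v).le e (Finset.mem_filter.mpr ⟨he, hev⟩) f
    (Finset.mem_filter.mpr ⟨hf, hfv⟩)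

theorem IsMatching.fst_ne_and_snd_ne (hm : G.IsMatching) (he : e ∈ G.E) (hf : f ∈ G.E)
    (hne : e ≠ f) : e.1 ≠ f.1 ∧ e.2 ≠ f.2 :=
  ⟨fun h => hne (hm.eq_of_incident he hf (Or.inl rfl) (Or.inl h.symm)),
    fun h => hne (hm.eq_of_incident he hf (Or.inr rfl) (Or.inr h.symm))⟩

theorem IsMatching.up_or_down (hm : G.IsMatching) (he : e ∈ G.E) (hf : f ∈ G.E) (hne : e ≠ f) :
    Up e f ∨ Up f e ∨ Down e f ∨ Down f e := by
  obtain ⟨h1, h2⟩ := hm.fst_ne_and_snd_ne he hf hne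
  rcases h1.lt_or_gt with h1 | h1 <;> rcases h2.lt_or_gt with h2 | h2
  · exact Or.inl ⟨h1, h2⟩
  · exact Or.inr (Or.inr (Or.inl ⟨h1, h2⟩))
  · exact Or.inr (Or.inr (Or.inr ⟨h1, h2⟩))
  · exact Or.inr (Or.inl ⟨h1, h2⟩)

theorem IsMatching.up_of_lt (hm : G.IsMatching) (he : e ∈ G.E) (hf : f ∈ G.E) (h : e < f) :
    Up e f := by
  obtain ⟨h1, h2⟩ := hm.fst_ne_and_snd_ne he hf h.ne
  exact ⟨lt_of_le_of_ne (Prod.le_def.mp h.le).1 h1, lt_of_le_of_ne (Prod.le_def.mp h.le).2 h2⟩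

/-- A `Down` step from `X i` to `Y i`, or back, would splice into a chain of length `w + 1`. -/
theorem IsMatching.le_or_le_of_isChainIn (hm : G.IsMatching) {P : Set (Fin G.n × Fin G.n)}
    (hPE : P ⊆ G.E) (hP : ¬ HasChain Down P (w + 1)) {X Y : Fin w → Fin G.n × Fin G.n}
    (hX : IsChainIn Down P X) (hY : IsChainIn Down P Y) (i : Fin w) : X i ≤ Y i ∨ Y i ≤ X i := by
  by_cases h : X i = Y i
  · exact Or.inl h.le
  rcases hm.up_or_down (hPE (hX.1 i)) (hPE (hY.1 i)) h with h | h | h | h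
  · exact Or.inl h.le
  · exact Or.inr h.le
  · exact (hP (hX.hasChain_succ_of_rel hY i h)).elim
  · exact (hP (hY.hasChain_succ_of_rel hX i h)).elim

theorem hasDiamond_of_up_down (e : Fin k → Fin k → Fin G.n × Fin G.n) (hmem : ∀ i j, e i j ∈ G.E)
    (hrow : ∀ i j j', j < j' → Up (e i j) (e i j'))
    (hcol : ∀ j i i', i < i' → Down (e i j) (e i' j)) : G.HasDiamond k := by
  have hrows : ∀ i i' j j', i < i' → e i j ≠ e i' j' := by
    intro i i' j j' hii h
    have hd : Down (e i j') (e i j) := by rw [h]; exact hcol j' i i' hii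
    rcases lt_trichotomy j j' with hjj | rfl | hjj
    · exact (hrow i j j' hjj).not_down_symm hd
    · exact irrefl _ hd
    · exact (hrow i j' j hjj).not_down hd
  refine ⟨e, hmem, ?_, hrow, hcol⟩
  rintro ⟨i, j⟩ ⟨i', j'⟩ h
  dsimp only at h
  rcases lt_trichotomy i i' with hii | rfl | hii
  · exact (hrows i i' j j' hii h).elim
  · exact congrArg (Prod.mk i)
      ((IsChainIn.injective (S := Set.univ) ⟨fun _ => trivial, hrow i⟩) h)
  · exact (hrows i' i j' j hii h.symm).elim

theorem IsMatching.not_hasChain_up_sdiff (hm : G.IsMatching) (hk : ¬ G.HasDiamond (k + 1))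
    {A : Finset (Fin G.n × Fin G.n)} (hAE : A ⊆ G.E)
    (hA : ¬ HasChain Down (A : Set (Fin G.n × Fin G.n)) (k + 1))
    (hAmax : ∀ S ⊆ G.E, ¬ HasChain Down (S : Set (Fin G.n × Fin G.n)) (k + 1) → S.card ≤ A.card) :
    ¬ HasChain Up ((G.E \ A : Finset _) : Set (Fin G.n × Fin G.n)) (k + 1) := by
  classical
  rintro ⟨q, hq⟩
  have hqA : ∀ i, q i ∈ G.E ∧ q i ∉ A := fun i => Finset.mem_sdiff.mp (hq.1 i)
  set P := A ∪ Finset.univ.image q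
  have hPE : P ⊆ G.E :=
    Finset.union_subset hAE (Finset.image_subset_iff.mpr fun i _ => (hqA i).1)
  have hPcard : P.card = A.card + (k + 1) := by
    rw [Finset.card_union_of_disjoint, Finset.card_image_of_injective _ hq.injective,
      Finset.card_univ, Fintype.card_fin]
    exact Finset.disjoint_right.mpr fun e he => by
      obtain ⟨i, -, rfl⟩ := Finset.mem_image.mp he
      exact (hqA i).2
  have hP : ¬ HasChain Down (P : Set (Fin G.n × Fin G.n)) (k + 2) := by
    rw [Finset.coe_union, Finset.coe_image, Finset.coe_univ, Set.image_univ]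
    refine not_hasChain_union_of_isAntichain hA ?_
    rintro _ ⟨i, rfl⟩ _ ⟨j, rfl⟩ hne h
    rcases lt_trichotomy i j with hij | rfl | hij
    · exact (hq.2 i j hij).not_down h
    · exact hne rfl
    · exact (hq.2 j i hij).not_down_symm h
  set R := Finset.univ.filter fun X : Fin (k + 1) → Fin G.n × Fin G.n =>
    IsChainIn Down (P : Set (Fin G.n × Fin G.n)) X
  have hXR {X} : X ∈ R ↔ IsChainIn Down (P : Set (Fin G.n × Fin G.n)) X := by simp [R]
  have hcomp {X Y} (hX : X ∈ R) (hY : Y ∈ R) :=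
    hm.le_or_le_of_isChainIn (by simpa using hPE) hP (hXR.mp hX) (hXR.mp hY)
  have hR : IsComparableSublattice R :=
    ⟨fun X hX Y hY => hXR.mpr ((hXR.mp hX).down_sup (hXR.mp hY) (hcomp hX hY)),
      fun X hX Y hY => hXR.mpr ((hXR.mp hX).down_inf (hXR.mp hY) (hcomp hX hY)),
      fun X hX Y hY => hcomp hX hY⟩
  have hmiss : ∀ D : Finset (Fin G.n × Fin G.n), D.card ≤ k → ∃ X ∈ R, ∀ i, X i ∉ D := by
    intro D hD
    obtain ⟨X, hX⟩ : HasChain Down ((P \ D : Finset _) : Set (Fin G.n × Fin G.n)) (k + 1) := by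
      by_contra hno
      have := hAmax _ (Finset.sdiff_subset.trans hPE) hno
      have := Finset.le_card_sdiff D P
      omega
    exact ⟨X, hXR.mpr (hX.mono (by simp)), fun i => (Finset.mem_sdiff.mp (hX.1 i)).2⟩
  obtain ⟨C, hC⟩ : HasChain StrongLT (R : Set (Fin (k + 1) → Fin G.n × Fin G.n)) (k + 1) := by
    by_contra hno
    obtain ⟨D, hDcard, hD⟩ := hR.exists_hitting_finset k hno
    obtain ⟨X, hXR, hX⟩ := hmiss D hDcard
    obtain ⟨i, hi⟩ := hD X hXR
    exact hX i hi
  have hCP (j) : IsChainIn Down (P : Set (Fin G.n × Fin G.n)) (C j) := hXR.mp (hC.1 j)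
  exact hk (hasDiamond_of_up_down (fun i j => C j i) (fun i j => hPE ((hCP j).1 i))
    (fun i j j' h => hm.up_of_lt (hPE ((hCP j).1 i)) (hPE ((hCP j').1 i)) (hC.2 j j' h i))
    fun j i i' h => (hCP j).2 i i' h)

theorem IsMatching.hasLayout_of_not_hasDiamond (hm : G.IsMatching)
    (hk : ¬ G.HasDiamond (k + 1)) : G.HasLayout k k := by
  classical
  obtain ⟨A, hA, hAmax⟩ := (G.E.powerset.filter fun S : Finset (Fin G.n × Fin G.n) =>
      ¬ HasChain Down (S : Set (Fin G.n × Fin G.n)) (k + 1)).exists_max_image Finset.card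
    ⟨∅, Finset.mem_filter.mpr ⟨Finset.empty_mem_powerset _, fun ⟨g, hg⟩ => by simpa using hg.1 0⟩⟩
  simp only [Finset.mem_filter, Finset.mem_powerset] at hA hAmax
  exact G.hasLayout_of_not_hasChain A hA.2
    (hm.not_hasChain_up_sdiff hk hA.1 hA.2 fun S hS hS' => hAmax S ⟨hS, hS'⟩)

end OGraph

/-- If the largest ⋄-pattern in a separated matching `M` has
size `k × k`, then `k ≤ mn(M) ≤ 2k`. -/
theorem diamond_bounds_mixed_page_number (M : OGraph) (k : ℕ)
    (hmatch : M.IsMatching) (hsep : M.Separated)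
    (hlow : M.HasDiamond k) (hhigh : ¬ M.HasDiamond (k + 1)) :
    k ≤ M.mn ∧ M.mn ≤ 2 * k := by
  have hL : M.HasLayout k k := hmatch.hasLayout_of_not_hasDiamond hhigh
  obtain ⟨s, q, hsq, hL'⟩ := M.exists_hasLayout_mn hL
  exact ⟨hsq ▸ hsep.le_add_of_hasDiamond hlow hL', two_mul k ▸ M.mn_le hL⟩

end MixedLayouts
end

section
/- Let M be a matching with a separated layout and let F(M) be the Ferrer's diagram of its poset P(M). If F(M) contains a square of size k×k (that is, c_k − c_{k−1} ≥ k), then M contains a k-⋄-pattern. -/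
namespace MixedLayouts

/-- `c_i` for the poset `P(M)` of a separated matching `M`: the maximum number
of edges covered by `i` chains. -/
noncomputable def chainCoverE (G : OGraph) (i : ℕ) : ℕ :=
  sSup {m | ∃ C : Fin i → Finset (Fin G.n × Fin G.n),
    (∀ j, C j ⊆ G.E ∧ IsPChain (C j)) ∧ (Finset.univ.biUnion C).card = m}

section SquareDiamondAux

open Finset

variable {n : ℕ}

instance {n : ℕ} (e f : Fin n × Fin n) : Decidable (Down e f) := by
  unfold Down; exact instDecidableAnd

instance {n : ℕ} (e f : Fin n × Fin n) : Decidable (Up e f) := by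
  unfold Up; exact instDecidableAnd

private lemma down_trans' {a b c : Fin n × Fin n} (h1 : Down a b) (h2 : Down b c) :
    Down a c := ⟨lt_trans h1.1 h2.1, lt_trans h2.2 h1.2⟩

private lemma down_ne {a b : Fin n × Fin n} (h : Down a b) : a ≠ b := by
  intro he; subst he; exact lt_irrefl _ h.1

private lemma up_down_absurd {a b : Fin n × Fin n} (h1 : Up a b) (h2 : Down a b) : False :=
  lt_asymm h1.2 h2.2

private lemma up_down_absurd' {a b : Fin n × Fin n} (h1 : Up a b) (h2 : Down b a) : False :=
  lt_asymm h1.1 h2.1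

/-- Length of the longest `Down`-chain inside `V` ending at `p` (where `p` itself is
counted, whether or not it belongs to `V`). -/
def vlev (V : Finset (Fin n × Fin n)) (p : Fin n × Fin n) : ℕ :=
  ((V.filter (fun q => Down q p)).attach.sup fun q => vlev V q.1) + 1
termination_by (p.1 : ℕ)
decreasing_by
  exact (Finset.mem_filter.mp q.2).2.1

lemma vlev_def (V : Finset (Fin n × Fin n)) (p : Fin n × Fin n) :
    vlev V p = ((V.filter (fun q => Down q p)).attach.sup fun q => vlev V q.1) + 1 := by
  rw [vlev]

lemma one_le_vlev (V : Finset (Fin n × Fin n)) (p : Fin n × Fin n) : 1 ≤ vlev V p := by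
  rw [vlev_def]; omega


lemma vlev_lt_of_down {V : Finset (Fin n × Fin n)} {q p : Fin n × Fin n}
    (hq : q ∈ V) (hd : Down q p) : vlev V q < vlev V p := by
  have hmem : q ∈ V.filter (fun r => Down r p) := Finset.mem_filter.mpr ⟨hq, hd⟩
  have h := Finset.le_sup (f := fun r : {x // x ∈ V.filter (fun r => Down r p)} => vlev V r.1)
    (Finset.mem_attach _ ⟨q, hmem⟩)
  rw [vlev_def V p]
  exact Nat.lt_succ_of_le (by simpa using h)

end SquareDiamondAux
section SquareDiamondAux2

open Finset

variable {n : ℕ}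

lemma exists_down_chain (V : Finset (Fin n × Fin n)) :
    ∀ (m : ℕ) (p : Fin n × Fin n), 0 < m → p ∈ V → m ≤ vlev V p →
    ∃ T : Fin m → Fin n × Fin n, (∀ i, T i ∈ V) ∧
      (∀ i j : Fin m, i < j → Down (T i) (T j)) ∧
      (∀ i : Fin m, (i : ℕ) = m - 1 → T i = p) := by
  intro m
  induction m with
  | zero => exact fun p h => absurd h (lt_irrefl 0)
  | succ m ih =>
    intro p _ hp hv
    by_cases hm : m = 0
    · subst hm
      refine ⟨fun _ => p, fun _ => hp, ?_, fun i _ => rfl⟩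
      intro i j hij
      have h1 := i.isLt; have h2 := j.isLt; have h3 := Fin.lt_def.mp hij
      omega
    · rw [vlev_def] at hv
      set s := (V.filter (fun q => Down q p)).attach with hs
      have hsup : m ≤ s.sup (fun q => vlev V q.1) := by omega
      have hne : s.Nonempty := by
        rcases Finset.eq_empty_or_nonempty s with he | hne
        · rw [he, Finset.sup_empty] at hsup
          simp at hsup; omega
        · exact hne
      obtain ⟨q, hqmem, hqeq⟩ := Finset.exists_mem_eq_sup s hne (fun q => vlev V q.1)
      have hqV : q.1 ∈ V := (Finset.mem_filter.mp q.2).1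
      have hqd : Down q.1 p := (Finset.mem_filter.mp q.2).2
      have hqv : m ≤ vlev V q.1 := by rw [hqeq] at hsup; exact hsup
      obtain ⟨T', hT'mem, hT'down, hT'last⟩ := ih q.1 (Nat.pos_of_ne_zero hm) hqV hqv
      refine ⟨fun i => if h : (i : ℕ) < m then T' ⟨i, h⟩ else p, ?_, ?_, ?_⟩
      · intro i; by_cases h : (i : ℕ) < m <;> simp [h, hT'mem, hp]
      · intro i j hij
        have hj' := j.isLt
        by_cases hjm : (j : ℕ) < m
        · have him : (i : ℕ) < m := lt_trans (Fin.lt_def.mp hij) hjm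
          simp only [dif_pos him, dif_pos hjm]
          exact hT'down _ _ (Fin.mk_lt_mk.mpr (Fin.lt_def.mp hij))
        · have him : (i : ℕ) < m := by have := Fin.lt_def.mp hij; omega
          simp only [dif_pos him, dif_neg hjm]
          by_cases hil : (i : ℕ) = m - 1
          · rw [hT'last ⟨i, him⟩ hil]; exact hqd
          · have hlast : T' ⟨m - 1, by omega⟩ = q.1 := hT'last _ rfl
            have hdw : Down (T' ⟨i, him⟩) (T' ⟨m - 1, by omega⟩) :=
              hT'down _ _ (Fin.mk_lt_mk.mpr (by omega))
            rw [hlast] at hdw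
            exact down_trans' hdw hqd
      · intro i hi
        have him : ¬ (i : ℕ) < m := by omega
        simp [him]

lemma vlev_align {V : Finset (Fin n × Fin n)} {k : ℕ} (hlev : ∀ p ∈ V, vlev V p ≤ k)
    {T : Fin k → Fin n × Fin n} (hmem : ∀ i, T i ∈ V)
    (hdown : ∀ i j : Fin k, i < j → Down (T i) (T j)) :
    ∀ j : Fin k, vlev V (T j) = (j : ℕ) + 1 := by
  have hlow : ∀ jv : ℕ, ∀ h : jv < k, jv + 1 ≤ vlev V (T ⟨jv, h⟩) := by
    intro jv
    induction jv with
    | zero => intro h; exact one_le_vlev V _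
    | succ jv ih =>
      intro h
      have h' : jv < k := by omega
      have hlt : vlev V (T ⟨jv, h'⟩) < vlev V (T ⟨jv + 1, h⟩) :=
        vlev_lt_of_down (hmem _) (hdown _ _ (Fin.mk_lt_mk.mpr (by omega)))
      have := ih h'
      omega
  have hstep : ∀ d jv : ℕ, ∀ h : jv + d < k,
      vlev V (T ⟨jv, by omega⟩) + d ≤ vlev V (T ⟨jv + d, h⟩) := by
    intro d
    induction d with
    | zero => intro jv h; simp
    | succ d ih =>
      intro jv h
      have h' : jv + d < k := by omega
      have h2 : vlev V (T ⟨jv + d, h'⟩) < vlev V (T ⟨jv + d + 1, by omega⟩) :=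
        vlev_lt_of_down (hmem _) (hdown _ _ (Fin.mk_lt_mk.mpr (by omega)))
      have h3 := ih jv h'
      have hee : (⟨jv + d + 1, by omega⟩ : Fin k) = ⟨jv + (d + 1), h⟩ := by
        apply Fin.ext; simp; omega
      rw [hee] at h2
      omega
  intro j
  obtain ⟨jv, hjv⟩ := j
  have h1 := hlow jv hjv
  rcases Nat.lt_or_ge (jv + 1) k with hlt | hge
  · have h2 := hstep (k - 1 - jv) jv (by omega)
    have h3 := hlev (T ⟨jv + (k - 1 - jv), by omega⟩) (hmem _)
    simp only [Fin.val_mk]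
    omega
  · have h3 := hlev (T ⟨jv, hjv⟩) (hmem _)
    simp only [Fin.val_mk]
    omega

lemma vlev_le_of_cover {k : ℕ} {C : Fin k → Finset (Fin n × Fin n)}
    (hC : ∀ j, IsPChain (C j)) {V : Finset (Fin n × Fin n)}
    (hV : V ⊆ Finset.univ.biUnion C) : ∀ p ∈ V, vlev V p ≤ k := by
  intro p hp
  by_contra hbig
  push_neg at hbig
  obtain ⟨T, hTmem, hTdown, -⟩ := exists_down_chain V (k + 1) p (by omega) hp (by omega)
  have hch : ∀ i : Fin (k + 1), ∃ j : Fin k, T i ∈ C j := by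
    intro i
    rcases Finset.mem_biUnion.mp (hV (hTmem i)) with ⟨j, -, hj⟩
    exact ⟨j, hj⟩
  choose φ hφ using hch
  have hinj : Function.Injective φ := by
    intro i i' he
    by_contra hne
    rcases lt_or_gt_of_ne hne with hlt | hlt
    · have hd := hTdown i i' hlt
      rcases hC (φ i) _ (hφ i) _ (he ▸ hφ i') (down_ne hd) with h | h
      · exact up_down_absurd h hd
      · exact up_down_absurd' h hd
    · have hd := hTdown i' i hlt
      rcases hC (φ i) _ (hφ i) _ (he ▸ hφ i') (Ne.symm (down_ne hd)) with h | h
      · exact up_down_absurd' h hd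
      · exact up_down_absurd h hd
  have hcard := Fintype.card_le_of_injective φ hinj
  simp only [Fintype.card_fin] at hcard
  omega

end SquareDiamondAux2
section SquareDiamondAux3

open Finset

variable {n : ℕ}

/-- A level-aligned transversal: a `Down`-chain of length `k` in `V`,
whose `vlev U`-levels are exactly `1, …, k`. -/
def IsTransv (U V : Finset (Fin n × Fin n)) (k : ℕ) (T : Fin k → Fin n × Fin n) : Prop :=
  (∀ j, T j ∈ V) ∧ (∀ j : Fin k, vlev U (T j) = (j : ℕ) + 1) ∧
    (∀ i j : Fin k, i < j → Down (T i) (T j))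

lemma IsTransv.mono {U V V' : Finset (Fin n × Fin n)} {k : ℕ} {T : Fin k → Fin n × Fin n}
    (h : IsTransv U V k T) (hVV' : V ⊆ V') : IsTransv U V' k T :=
  ⟨fun j => hVV' (h.1 j), h.2.1, h.2.2⟩

variable {U : Finset (Fin n × Fin n)}

lemma same_level_up (Hcomp : ∀ e ∈ U, ∀ f ∈ U, e ≠ f → Up e f ∨ Up f e ∨ Down e f ∨ Down f e) {a b : Fin n × Fin n} (ha : a ∈ U) (hb : b ∈ U)
    (hl : vlev U a = vlev U b) (hne : a ≠ b) : Up a b ∨ Up b a := by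
  rcases Hcomp a ha b hb hne with h | h | h | h
  · exact Or.inl h
  · exact Or.inr h
  · exact absurd hl (by have := vlev_lt_of_down ha h; omega)
  · exact absurd hl (by have := vlev_lt_of_down hb h; omega)

lemma same_level_fst_lt (Hcomp : ∀ e ∈ U, ∀ f ∈ U, e ≠ f → Up e f ∨ Up f e ∨ Down e f ∨ Down f e) {a b : Fin n × Fin n} (ha : a ∈ U) (hb : b ∈ U)
    (hl : vlev U a = vlev U b) (hfst : a.1 < b.1) : Up a b := by
  have hne : a ≠ b := fun he => by rw [he] at hfst; exact lt_irrefl _ hfst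
  rcases same_level_up Hcomp ha hb hl hne with h | h
  · exact h
  · exact absurd hfst (lt_asymm h.1)

lemma same_level_fst_eq (Hcomp : ∀ e ∈ U, ∀ f ∈ U, e ≠ f → Up e f ∨ Up f e ∨ Down e f ∨ Down f e) {a b : Fin n × Fin n} (ha : a ∈ U) (hb : b ∈ U)
    (hl : vlev U a = vlev U b) (hfst : a.1 = b.1) : a = b := by
  by_contra hne
  rcases same_level_up Hcomp ha hb hl hne with h | h
  · exact absurd hfst (ne_of_lt h.1)
  · exact absurd hfst.symm (ne_of_lt h.1)

lemma same_level_snd_le (Hcomp : ∀ e ∈ U, ∀ f ∈ U, e ≠ f → Up e f ∨ Up f e ∨ Down e f ∨ Down f e) {a b : Fin n × Fin n} (ha : a ∈ U) (hb : b ∈ U)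
    (hl : vlev U a = vlev U b) (hfst : a.1 ≤ b.1) : a.2 ≤ b.2 := by
  rcases lt_or_eq_of_le hfst with h | h
  · exact le_of_lt (same_level_fst_lt Hcomp ha hb hl h).2
  · rw [same_level_fst_eq Hcomp ha hb hl h]

/-- Pointwise maximum (by first coordinate) of two transversals. -/
def maxT {k : ℕ} (T₁ T₂ : Fin k → Fin n × Fin n) : Fin k → Fin n × Fin n :=
  fun j => if (T₁ j).1 < (T₂ j).1 then T₂ j else T₁ j

/-- Pointwise minimum (by first coordinate) of two transversals. -/
def minT {k : ℕ} (T₁ T₂ : Fin k → Fin n × Fin n) : Fin k → Fin n × Fin n :=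
  fun j => if (T₁ j).1 < (T₂ j).1 then T₁ j else T₂ j

lemma maxT_isTransv (Hcomp : ∀ e ∈ U, ∀ f ∈ U, e ≠ f → Up e f ∨ Up f e ∨ Down e f ∨ Down f e)
    {V : Finset (Fin n × Fin n)} {k : ℕ} {T₁ T₂ : Fin k → Fin n × Fin n} (hVU : V ⊆ U)
    (h₁ : IsTransv U V k T₁) (h₂ : IsTransv U V k T₂) : IsTransv U V k (maxT T₁ T₂) := by
  refine ⟨?_, ?_, ?_⟩
  · intro j; unfold maxT; split
    · exact h₂.1 j
    · exact h₁.1 j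
  · intro j; unfold maxT; split
    · exact h₂.2.1 j
    · exact h₁.2.1 j
  · intro i j hij
    have hd₁ := h₁.2.2 i j hij
    have hd₂ := h₂.2.2 i j hij
    have hlevi : vlev U (T₁ i) = vlev U (T₂ i) := by rw [h₁.2.1 i, h₂.2.1 i]
    have hlevj : vlev U (T₁ j) = vlev U (T₂ j) := by rw [h₁.2.1 j, h₂.2.1 j]
    unfold maxT
    by_cases hi : (T₁ i).1 < (T₂ i).1 <;> by_cases hj : (T₁ j).1 < (T₂ j).1
    · rw [if_pos hi, if_pos hj]; exact hd₂
    · rw [if_pos hi, if_neg hj]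
      have hup : Up (T₁ i) (T₂ i) := same_level_fst_lt Hcomp (hVU (h₁.1 i)) (hVU (h₂.1 i)) hlevi hi
      exact ⟨lt_of_lt_of_le hd₂.1 (le_of_not_gt hj), lt_trans hd₁.2 hup.2⟩
    · rw [if_neg hi, if_pos hj]
      have hsnd : (T₂ i).2 ≤ (T₁ i).2 :=
        same_level_snd_le Hcomp (hVU (h₂.1 i)) (hVU (h₁.1 i)) hlevi.symm (le_of_not_gt hi)
      exact ⟨lt_trans hd₁.1 hj, lt_of_lt_of_le hd₂.2 hsnd⟩
    · rw [if_neg hi, if_neg hj]; exact hd₁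

lemma minT_isTransv (Hcomp : ∀ e ∈ U, ∀ f ∈ U, e ≠ f → Up e f ∨ Up f e ∨ Down e f ∨ Down f e)
    {V : Finset (Fin n × Fin n)} {k : ℕ} {T₁ T₂ : Fin k → Fin n × Fin n} (hVU : V ⊆ U)
    (h₁ : IsTransv U V k T₁) (h₂ : IsTransv U V k T₂) : IsTransv U V k (minT T₁ T₂) := by
  refine ⟨?_, ?_, ?_⟩
  · intro j; unfold minT; split
    · exact h₁.1 j
    · exact h₂.1 j
  · intro j; unfold minT; split
    · exact h₁.2.1 j
    · exact h₂.2.1 j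
  · intro i j hij
    have hd₁ := h₁.2.2 i j hij
    have hd₂ := h₂.2.2 i j hij
    have hlevi : vlev U (T₁ i) = vlev U (T₂ i) := by rw [h₁.2.1 i, h₂.2.1 i]
    have hlevj : vlev U (T₁ j) = vlev U (T₂ j) := by rw [h₁.2.1 j, h₂.2.1 j]
    unfold minT
    by_cases hi : (T₁ i).1 < (T₂ i).1 <;> by_cases hj : (T₁ j).1 < (T₂ j).1
    · rw [if_pos hi, if_pos hj]; exact hd₁
    · rw [if_pos hi, if_neg hj]
      have hsnd : (T₂ j).2 ≤ (T₁ j).2 :=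
        same_level_snd_le Hcomp (hVU (h₂.1 j)) (hVU (h₁.1 j)) hlevj.symm (le_of_not_gt hj)
      exact ⟨lt_trans hi hd₂.1, lt_of_le_of_lt hsnd hd₁.2⟩
    · rw [if_neg hi, if_pos hj]
      have hup : Up (T₁ j) (T₂ j) := same_level_fst_lt Hcomp (hVU (h₁.1 j)) (hVU (h₂.1 j)) hlevj hj
      exact ⟨lt_of_le_of_lt (le_of_not_gt hi) hd₁.1, lt_trans hup.2 hd₂.2⟩
    · rw [if_neg hi, if_neg hj]; exact hd₂

/-- Total of first coordinates, used to pick extremal transversals. -/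
def tsum {k : ℕ} (T : Fin k → Fin n × Fin n) : ℕ := ∑ j, ((T j).1 : ℕ)

lemma exists_min_transv
    (Hcomp : ∀ e ∈ U, ∀ f ∈ U, e ≠ f → Up e f ∨ Up f e ∨ Down e f ∨ Down f e)
    {V : Finset (Fin n × Fin n)} {k : ℕ} (hVU : V ⊆ U) (hne : ∃ T, IsTransv U V k T) :
    ∃ p, IsTransv U V k p ∧ ∀ T, IsTransv U V k T → ∀ j, (p j).1 ≤ (T j).1 := by
  have hAne : {m | ∃ T, IsTransv U V k T ∧ tsum T = m}.Nonempty := by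
    obtain ⟨T, hT⟩ := hne; exact ⟨tsum T, T, hT, rfl⟩
  obtain ⟨p, hp, hps⟩ := Nat.sInf_mem hAne
  refine ⟨p, hp, ?_⟩
  intro T hT j
  by_contra hlt
  push_neg at hlt
  have hm := minT_isTransv Hcomp hVU hT hp
  have hless : tsum (minT T p) < tsum p := by
    apply Finset.sum_lt_sum
    · intro i _
      unfold minT; split
      · next h => exact le_of_lt h
      · exact le_refl _
    · refine ⟨j, Finset.mem_univ j, ?_⟩
      unfold minT; rw [if_pos hlt]
      exact hlt
  have hle : sInf {m | ∃ T, IsTransv U V k T ∧ tsum T = m} ≤ tsum (minT T p) :=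
    Nat.sInf_le ⟨minT T p, hm, rfl⟩
  omega

end SquareDiamondAux3
section SquareDiamondAux4

open Finset

lemma comp_of_matching (M : OGraph) (hmatch : M.IsMatching) :
    ∀ e ∈ M.E, ∀ f ∈ M.E, e ≠ f → Up e f ∨ Up f e ∨ Down e f ∨ Down f e := by
  intro e he f hf hne
  have hfst : e.1 ≠ f.1 := by
    intro h
    have hdeg := hmatch e.1
    have h2 : 1 < M.degree e.1 := by
      unfold OGraph.degree
      exact Finset.one_lt_card.mpr
        ⟨e, Finset.mem_filter.mpr ⟨he, Or.inl rfl⟩,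
         f, Finset.mem_filter.mpr ⟨hf, Or.inl h.symm⟩, hne⟩
    omega
  have hsnd : e.2 ≠ f.2 := by
    intro h
    have hdeg := hmatch e.2
    have h2 : 1 < M.degree e.2 := by
      unfold OGraph.degree
      exact Finset.one_lt_card.mpr
        ⟨e, Finset.mem_filter.mpr ⟨he, Or.inr rfl⟩,
         f, Finset.mem_filter.mpr ⟨hf, Or.inr h.symm⟩, hne⟩
    omega
  rcases lt_or_gt_of_ne hfst with h1 | h1 <;> rcases lt_or_gt_of_ne hsnd with h2 | h2
  · exact Or.inl ⟨h1, h2⟩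
  · exact Or.inr (Or.inr (Or.inl ⟨h1, h2⟩))
  · exact Or.inr (Or.inr (Or.inr ⟨h1, h2⟩))
  · exact Or.inr (Or.inl ⟨h1, h2⟩)

lemma mirsky_bound (M : OGraph) (r : ℕ) {V : Finset (Fin M.n × Fin M.n)}
    (hVE : V ⊆ M.E)
    (HcompE : ∀ e ∈ M.E, ∀ f ∈ M.E, e ≠ f → Up e f ∨ Up f e ∨ Down e f ∨ Down f e)
    (hlev : ∀ p ∈ V, vlev V p ≤ r) :
    V.card ≤ chainCoverE M r := by
  have hbdd : BddAbove {m | ∃ C : Fin r → Finset (Fin M.n × Fin M.n),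
      (∀ j, C j ⊆ M.E ∧ IsPChain (C j)) ∧ (Finset.univ.biUnion C).card = m} := by
    refine ⟨M.E.card, ?_⟩
    rintro m ⟨C, hC, rfl⟩
    exact Finset.card_le_card (Finset.biUnion_subset.mpr fun j _ => (hC j).1)
  apply le_csSup hbdd
  refine ⟨fun j => V.filter (fun p => vlev V p = (j : ℕ) + 1), ?_, ?_⟩
  · intro j
    constructor
    · exact subset_trans (Finset.filter_subset _ _) hVE
    · intro e he f hf hne
      have he' := Finset.mem_filter.mp he
      have hf' := Finset.mem_filter.mp hf
      rcases HcompE e (hVE he'.1) f (hVE hf'.1) hne with h | h | h | h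
      · exact Or.inl h
      · exact Or.inr h
      · exact absurd (he'.2.trans hf'.2.symm)
          (by have := vlev_lt_of_down he'.1 h; omega)
      · exact absurd (he'.2.trans hf'.2.symm)
          (by have := vlev_lt_of_down hf'.1 h; omega)
  · have hU : Finset.univ.biUnion
        (fun j : Fin r => V.filter (fun p => vlev V p = (j : ℕ) + 1)) = V := by
      apply Finset.Subset.antisymm
      · exact Finset.biUnion_subset.mpr fun j _ => Finset.filter_subset _ _
      · intro p hp
        have h1 := one_le_vlev V p
        have h2 := hlev p hp
        refine Finset.mem_biUnion.mpr ⟨⟨vlev V p - 1, by omega⟩, Finset.mem_univ _, ?_⟩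
        refine Finset.mem_filter.mpr ⟨hp, ?_⟩
        simp only [Fin.val_mk]
        omega
    rw [hU]

end SquareDiamondAux4
section SquareDiamondAux5

open Finset

variable {n : ℕ} {U : Finset (Fin n × Fin n)}

lemma tsum_le {k : ℕ} (T : Fin k → Fin n × Fin n) : tsum T ≤ k * n := by
  unfold tsum
  calc ∑ j, ((T j).1 : ℕ) ≤ ∑ _j : Fin k, n :=
        Finset.sum_le_sum (fun i _ => le_of_lt (T i).1.isLt)
    _ = k * n := by simp [Finset.sum_const, Finset.card_univ]

lemma exists_sorted_transv
    (Hcomp : ∀ e ∈ U, ∀ f ∈ U, e ≠ f → Up e f ∨ Up f e ∨ Down e f ∨ Down f e) {k : ℕ} :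
    ∀ (m : ℕ) (V : Finset (Fin n × Fin n)), V ⊆ U →
      (∀ X : Finset (Fin n × Fin n), X ⊆ V → X.card < m →
        ∃ T : Fin k → Fin n × Fin n, IsTransv U (V \ X) k T) →
      ∃ P : Fin m → Fin k → Fin n × Fin n,
        (∀ i, IsTransv U V k (P i)) ∧
        (∀ i i' : Fin m, i < i' → ∀ j, Up (P i j) (P i' j)) := by
  intro m
  induction m with
  | zero =>
    intro V _ _
    exact ⟨fun i => i.elim0, fun i => i.elim0, fun i => i.elim0⟩
  | succ m ih =>
    intro V hVU hblk
    have hne : ∃ T, IsTransv U V k T := by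
      obtain ⟨T, hT⟩ := hblk ∅ (Finset.empty_subset V) (by simp)
      rw [Finset.sdiff_empty] at hT
      exact ⟨T, hT⟩
    obtain ⟨p, hp, hpmin⟩ := exists_min_transv Hcomp hVU hne
    have hpmin' : ∀ T, IsTransv U V k T → ∀ j, T j = p j ∨ Up (p j) (T j) := by
      intro T hT j
      rcases eq_or_lt_of_le (hpmin T hT j) with h | h
      · exact Or.inl (same_level_fst_eq Hcomp (hVU (hp.1 j)) (hVU (hT.1 j))
          (by rw [hp.2.1 j, hT.2.1 j]) h).symm
      · exact Or.inr (same_level_fst_lt Hcomp (hVU (hp.1 j)) (hVU (hT.1 j))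
          (by rw [hp.2.1 j, hT.2.1 j]) h)
    have hxV' : ∀ X' : Finset (Fin n × Fin n), X' ⊆ V \ Finset.image p Finset.univ →
        X'.card < m → ∃ T, IsTransv U ((V \ Finset.image p Finset.univ) \ X') k T := by
      intro X' hX'sub hX'card
      by_contra hno
      push_neg at hno
      have hne' : ∃ T, IsTransv U (V \ X') k T :=
        hblk X' (subset_trans hX'sub Finset.sdiff_subset) (by omega)
      have hhit : ∀ T, IsTransv U (V \ X') k T → ∃ j, T j = p j := by
        intro T hT
        by_contra hnone
        push_neg at hnone
        refine hno T ⟨?_, hT.2.1, hT.2.2⟩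
        intro j
        have hTj := hT.1 j
        rw [Finset.mem_sdiff] at hTj
        rw [Finset.mem_sdiff, Finset.mem_sdiff]
        refine ⟨⟨hTj.1, ?_⟩, hTj.2⟩
        intro hmem
        rcases Finset.mem_image.mp hmem with ⟨j', -, hj'⟩
        have hlev : ((j' : ℕ) + 1) = ((j : ℕ) + 1) := by
          rw [← hp.2.1 j', hj', hT.2.1 j]
        have hjj : j' = j := Fin.ext (by omega)
        rw [hjj] at hj'
        exact hnone j hj'.symm
      have hAne : {t | ∃ T, IsTransv U (V \ X') k T ∧ tsum T = t}.Nonempty := by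
        obtain ⟨T, hT⟩ := hne'; exact ⟨tsum T, T, hT, rfl⟩
      have hAbdd : BddAbove {t | ∃ T, IsTransv U (V \ X') k T ∧ tsum T = t} := by
        refine ⟨k * n, ?_⟩
        rintro t ⟨T, -, rfl⟩
        exact tsum_le T
      obtain ⟨Tm, hTm, hTms⟩ := Nat.sSup_mem hAne hAbdd
      obtain ⟨j0, hj0⟩ := hhit Tm hTm
      have hall : ∀ T, IsTransv U (V \ X') k T → T j0 = p j0 := by
        intro T hT
        rcases hpmin' T (hT.mono Finset.sdiff_subset) j0 with h | h
        · exact h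
        · exfalso
          have hTM := maxT_isTransv Hcomp (subset_trans Finset.sdiff_subset hVU) hTm hT
          have hstrict : (Tm j0).1 < (T j0).1 := by rw [hj0]; exact h.1
          have hgt : tsum Tm < tsum (maxT Tm T) := by
            apply Finset.sum_lt_sum
            · intro i _
              unfold maxT
              split
              · next hcase => exact le_of_lt hcase
              · exact le_refl _
            · refine ⟨j0, Finset.mem_univ _, ?_⟩
              unfold maxT
              rw [if_pos hstrict]
              exact hstrict
          have hle : tsum (maxT Tm T) ≤ sSup {t | ∃ T, IsTransv U (V \ X') k T ∧ tsum T = t} :=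
            le_csSup hAbdd ⟨maxT Tm T, hTM, rfl⟩
          omega
      have hins : insert (p j0) X' ⊆ V :=
        Finset.insert_subset (hp.1 j0) (subset_trans hX'sub Finset.sdiff_subset)
      have hcard : (insert (p j0) X').card < m + 1 := by
        have := Finset.card_insert_le (p j0) X'
        omega
      obtain ⟨T2, hT2⟩ := hblk _ hins hcard
      have hT2' : IsTransv U (V \ X') k T2 :=
        hT2.mono (Finset.sdiff_subset_sdiff (Finset.Subset.refl V) (Finset.subset_insert _ _))
      have hT2j0 := hT2.1 j0
      rw [Finset.mem_sdiff] at hT2j0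
      exact hT2j0.2 ((hall T2 hT2') ▸ Finset.mem_insert_self _ _)
    obtain ⟨P', hP't, hP'sort⟩ := ih (V \ Finset.image p Finset.univ)
      (subset_trans Finset.sdiff_subset hVU) hxV'
    refine ⟨fun i => if h : i = 0 then p else P' (i.pred h), ?_, ?_⟩
    · intro i
      dsimp only
      by_cases h : i = 0
      · rw [dif_pos h]; exact hp
      · rw [dif_neg h]; exact (hP't _).mono Finset.sdiff_subset
    · intro i i' hlt j
      dsimp only
      have hi'0 : i' ≠ 0 := by
        rintro rfl
        have := Fin.lt_def.mp hlt
        simp only [Fin.val_zero] at this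
        omega
      rw [dif_neg hi'0]
      by_cases h : i = 0
      · rw [dif_pos h]
        have hTi' := hP't (i'.pred hi'0)
        rcases hpmin' _ (hTi'.mono Finset.sdiff_subset) j with he | hu
        · exfalso
          have hmem := hTi'.1 j
          rw [Finset.mem_sdiff] at hmem
          exact hmem.2 (Finset.mem_image.mpr ⟨j, Finset.mem_univ _, he.symm⟩)
        · exact hu
      · rw [dif_neg h]
        refine hP'sort _ _ ?_ j
        have h1 := Fin.lt_def.mp hlt
        have h2 : (i.pred h : ℕ) = (i : ℕ) - 1 := rfl
        have h3 : (i'.pred hi'0 : ℕ) = (i' : ℕ) - 1 := rfl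
        have h4 : (i : ℕ) ≠ 0 := fun hh => h (Fin.ext hh)
        rw [Fin.lt_def, h2, h3]
        omega
end SquareDiamondAux5
/-- If the Ferrer's diagram of a separated matching `M`
contains a square of size `k × k` (that is, `c_k − c_{k−1} ≥ k`), then `M`
contains a `k`-⋄-pattern. -/
theorem square_implies_diamond (M : OGraph) (k : ℕ)
    (hmatch : M.IsMatching) (hsep : M.Separated)
    (hsq : k ≤ chainCoverE M k - chainCoverE M (k - 1)) :
    M.HasDiamond k := by
  classical
  rcases Nat.eq_zero_or_pos k with hk0 | hkpos
  · subst hk0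
    exact ⟨fun i _ => i.elim0, fun i => i.elim0, fun a => a.1.elim0,
      fun i => i.elim0, fun j => j.elim0⟩
  · have HcompE := comp_of_matching M hmatch
    have hAne : {m | ∃ C : Fin k → Finset (Fin M.n × Fin M.n),
        (∀ j, C j ⊆ M.E ∧ IsPChain (C j)) ∧ (Finset.univ.biUnion C).card = m}.Nonempty := by
      refine ⟨0, fun _ => ∅, fun j => ⟨Finset.empty_subset _, ?_⟩, by simp [Finset.eq_empty_iff_forall_notMem]⟩
      intro e he
      exact absurd he (Finset.notMem_empty e)
    have hAbdd : BddAbove {m | ∃ C : Fin k → Finset (Fin M.n × Fin M.n),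
        (∀ j, C j ⊆ M.E ∧ IsPChain (C j)) ∧ (Finset.univ.biUnion C).card = m} := by
      refine ⟨M.E.card, ?_⟩
      rintro m ⟨C, hC, rfl⟩
      exact Finset.card_le_card (Finset.biUnion_subset.mpr fun j _ => (hC j).1)
    have hmem : chainCoverE M k ∈ {m | ∃ C : Fin k → Finset (Fin M.n × Fin M.n),
        (∀ j, C j ⊆ M.E ∧ IsPChain (C j)) ∧ (Finset.univ.biUnion C).card = m} := by
      unfold chainCoverE
      exact Nat.sSup_mem hAne hAbdd
    simp only [Set.mem_setOf_eq] at hmem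
    obtain ⟨C, hC, hCcard⟩ := hmem
    set U := Finset.univ.biUnion C with hU
    have hUE : U ⊆ M.E := Finset.biUnion_subset.mpr fun j _ => (hC j).1
    have HcompU : ∀ e ∈ U, ∀ f ∈ U, e ≠ f → Up e f ∨ Up f e ∨ Down e f ∨ Down f e :=
      fun e he f hf => HcompE e (hUE he) f (hUE hf)
    have hlevU : ∀ p ∈ U, vlev U p ≤ k :=
      vlev_le_of_cover (fun j => (hC j).2) (by rw [hU])
    have hsq2 : chainCoverE M (k - 1) + k ≤ U.card := by
      have hck : U.card = chainCoverE M k := hCcard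
      omega
    have hblk : ∀ X : Finset (Fin M.n × Fin M.n), X ⊆ U → X.card < k →
        ∃ T, IsTransv U (U \ X) k T := by
      intro X hXU hXc
      by_contra hno
      push_neg at hno
      have hlev' : ∀ p ∈ U \ X, vlev (U \ X) p ≤ k - 1 := by
        intro p hp
        by_contra hbig
        push_neg at hbig
        obtain ⟨T, hTmem, hTdown, -⟩ := exists_down_chain (U \ X) k p hkpos hp (by omega)
        have halign := vlev_align hlevU (fun i => (Finset.mem_sdiff.mp (hTmem i)).1) hTdown
        exact hno T ⟨hTmem, halign, hTdown⟩
      have hmb := mirsky_bound M (k - 1) (subset_trans Finset.sdiff_subset hUE) HcompE hlev'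
      have hcs : (U \ X).card = U.card - X.card := Finset.card_sdiff_of_subset hXU
      have hxu : X.card ≤ U.card := Finset.card_le_card hXU
      omega
    obtain ⟨P, hPt, hPsort⟩ := exists_sorted_transv HcompU k U (Finset.Subset.refl U) hblk
    refine ⟨fun i j => P j i, fun i j => hUE ((hPt j).1 i), ?_, ?_, ?_⟩
    · intro a b hab
      simp only at hab
      have h1 : ((a.1 : ℕ) + 1) = ((b.1 : ℕ) + 1) := by
        rw [← (hPt a.2).2.1 a.1, hab, (hPt b.2).2.1 b.1]
      have ha1 : a.1 = b.1 := Fin.ext (by omega)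
      have ha2 : a.2 = b.2 := by
        by_contra hne
        rw [← ha1] at hab
        rcases lt_or_gt_of_ne hne with h | h
        · have hup := hPsort a.2 b.2 h a.1
          rw [hab] at hup
          exact absurd hup.1 (lt_irrefl _)
        · have hup := hPsort b.2 a.2 h a.1
          rw [hab] at hup
          exact absurd hup.1 (lt_irrefl _)
      exact Prod.ext ha1 ha2
    · intro i j j' hjj'
      exact hPsort j j' hjj' i
    · intro j i i' hii'
      exact (hPt j).2.2 i i' hii'

end MixedLayouts
end

section
/- For every k ≥ 1, there exists a matching with a separated layout that contains no ⋄-pattern of size larger than k×k (i.e., no (k+1)-⋄-pattern) and whose mixed page number equals 2k. -/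
namespace MixedLayouts

/-!
Take `2k` pairwise nested blocks, block `b` being a twist of `2k - b` pairwise crossing
edges. Within a block the edges are `↗`-related and across blocks `↘`-related, so every row
of a `(k+1)`-⋄-pattern lies in a block of size `≥ k + 1`, while its `k + 1` rows lie in
distinct blocks; only the `k` blocks `b < k` are that large. A `k`-stack `k`-queue layout puts
each large block in its own queue and spreads the small blocks over the stacks. Conversely, in
an `s`-stack `q`-queue layout with `s + q < 2k`, either one of the blocks `0, …, q` avoids
the queues and has more than `s` edges, forcing two crossing edges onto one stack, or all
`q + 1` of them meet the queues, forcing two nested edges into one queue.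
-/

open Finset Function

theorem OGraph.mn_eq_of_hasLayout {G : OGraph} {s q : ℕ} (h : G.HasLayout s q)
    (hmin : ∀ s' q', s' + q' < s + q → ¬ G.HasLayout s' q') : G.mn = s + q :=
  IsLeast.csInf_eq ⟨⟨s, q, rfl, h⟩, by
    rintro _ ⟨s', q', rfl, h'⟩
    by_contra hlt
    exact hmin s' q' (not_le.mp hlt) h'⟩

theorem card_filter_apply_eq_of_bijective {α β : Type*} [Fintype α] [DecidableEq β]
    {f : α → β} (hf : Bijective f) (b : β) : #{a | f a = b} = 1 := by
  obtain ⟨a, rfl⟩ := hf.2 b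
  exact card_eq_one.mpr ⟨a, by ext a'; simp [hf.1.eq_iff]⟩

section OfSides

variable {ι : Type*} {N : ℕ} (l r : ι → Fin N)

/-- The edge joining position `l i` of the first half to position `r i` of the second half. -/
def joinEdge (i : ι) : Fin (N + N) × Fin (N + N) :=
  (Fin.castAdd N (l i), Fin.natAdd N (r i))

section Edges

variable {l r} {i i' : ι}

theorem up_joinEdge_iff :
    Up (joinEdge l r i) (joinEdge l r i') ↔ l i < l i' ∧ r i < r i' := by
  simp only [Up, joinEdge, Fin.lt_def, Fin.val_castAdd, Fin.val_natAdd]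
  omega

theorem down_joinEdge_iff :
    Down (joinEdge l r i) (joinEdge l r i') ↔ l i < l i' ∧ r i' < r i := by
  simp only [Down, joinEdge, Fin.lt_def, Fin.val_castAdd, Fin.val_natAdd]
  omega

theorem cross_joinEdge_iff : Cross (joinEdge l r i) (joinEdge l r i') ↔
    (l i < l i' ∧ r i < r i') ∨ (l i' < l i ∧ r i' < r i) := by
  simp only [Cross, joinEdge, Fin.lt_def, Fin.val_castAdd, Fin.val_natAdd]
  omega

theorem nest_joinEdge_iff : Nest (joinEdge l r i) (joinEdge l r i') ↔
    (l i < l i' ∧ r i' < r i) ∨ (l i' < l i ∧ r i < r i') := by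
  simp only [Nest, joinEdge, Fin.lt_def, Fin.val_castAdd, Fin.val_natAdd]
  omega

end Edges

variable [Fintype ι]

def OGraph.ofSides : OGraph where
  n := N + N
  E := univ.image (joinEdge l r)
  lt_of_mem := by
    simp only [mem_image, mem_univ, true_and, forall_exists_index]
    rintro _ i rfl
    simp only [joinEdge, Fin.lt_def, Fin.val_castAdd, Fin.val_natAdd]
    omega

variable {l r}

theorem OGraph.mem_ofSides {e : Fin (N + N) × Fin (N + N)} :
    e ∈ (OGraph.ofSides l r).E ↔ ∃ i, joinEdge l r i = e :=
  mem_image.trans (by simp)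

theorem OGraph.ofSides_separated : (OGraph.ofSides l r).Separated := by
  refine ⟨N, fun e he => ?_⟩
  obtain ⟨i, rfl⟩ := OGraph.mem_ofSides.mp he
  simp [joinEdge]

theorem OGraph.ofSides_isMatching (hl : Bijective l) (hr : Bijective r) :
    (OGraph.ofSides l r).IsMatching := by
  have hinj : Injective (joinEdge l r) := fun i i' h =>
    hl.1 (Fin.castAdd_inj.mp (congrArg Prod.fst h))
  intro (v : Fin (N + N))
  show #((univ.image (joinEdge l r)).filter fun e => e.1 = v ∨ e.2 = v) = 1
  rw [filter_image, card_image_of_injective _ hinj]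
  induction v using Fin.addCases with
  | left a =>
    rw [← card_filter_apply_eq_of_bijective hl a]
    congr 1
    refine filter_congr fun i _ => ?_
    simp only [joinEdge, Fin.ext_iff, Fin.val_castAdd, Fin.val_natAdd]
    omega
  | right a =>
    rw [← card_filter_apply_eq_of_bijective hr a]
    congr 1
    refine filter_congr fun i _ => ?_
    simp only [joinEdge, Fin.ext_iff, Fin.val_castAdd, Fin.val_natAdd]
    omega

variable (l r) in
theorem OGraph.ofSides_hasLayout_iff {s q : ℕ} :
    (OGraph.ofSides l r).HasLayout s q ↔ ∃ page : ι → ℕ, (∀ i, page i < s + q) ∧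
      ∀ i i', page i = page i' →
        (page i < s → ¬ Cross (joinEdge l r i) (joinEdge l r i')) ∧
        (s ≤ page i → ¬ Nest (joinEdge l r i) (joinEdge l r i')) := by
  constructor
  · rintro ⟨c, hlt, hc⟩
    have hmem i : joinEdge l r i ∈ (OGraph.ofSides l r).E := OGraph.mem_ofSides.mpr ⟨i, rfl⟩
    exact ⟨c ∘ joinEdge l r, fun i => hlt _ (hmem i), fun i i' => hc _ (hmem i) _ (hmem i')⟩
  · rintro ⟨page, hlt, hpage⟩
    classical
    let c (e : Fin (N + N) × Fin (N + N)) : ℕ :=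
      if h : ∃ i, joinEdge l r i = e then page h.choose else 0
    have hc i : ∃ i₀, joinEdge l r i₀ = joinEdge l r i ∧ c (joinEdge l r i) = page i₀ :=
      have h : ∃ i₀, joinEdge l r i₀ = joinEdge l r i := ⟨i, rfl⟩
      ⟨h.choose, h.choose_spec, dif_pos h⟩
    refine ⟨c, ?_, ?_⟩
    · rintro _ he
      obtain ⟨i, rfl⟩ := OGraph.mem_ofSides.mp he
      obtain ⟨i₀, -, hi₀⟩ := hc i
      exact hi₀ ▸ hlt i₀
    · rintro _ he _ hf
      obtain ⟨i, rfl⟩ := OGraph.mem_ofSides.mp he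
      obtain ⟨i', rfl⟩ := OGraph.mem_ofSides.mp hf
      obtain ⟨i₀, he₀, hi₀⟩ := hc i
      obtain ⟨i₀', he₀', hi₀'⟩ := hc i'
      rw [hi₀, hi₀', ← he₀, ← he₀']
      exact hpage i₀ i₀'

end OfSides

section NestedTwists

variable {w : ℕ → ℕ} {m : ℕ}

variable (w) in
def offset (b : ℕ) : ℕ := ∑ i ∈ range b, w i

theorem offset_succ (b : ℕ) : offset w (b + 1) = offset w b + w b := sum_range_succ _ _

theorem offset_mono : Monotone (offset w) := fun _ _ h =>
  sum_le_sum_of_subset (range_subset_range.mpr h)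

theorem offset_succ_le {b b' : ℕ} (h : b < b') : offset w b + w b ≤ offset w b' :=
  offset_succ (w := w) b ▸ offset_mono h

theorem offset_add_lt_offset_add_iff {b b' j j' : ℕ} (hj : j < w b) (hj' : j' < w b') :
    offset w b + j < offset w b' + j' ↔ b < b' ∨ b = b' ∧ j < j' := by
  rcases lt_trichotomy b b' with h | rfl | h
  · have := offset_succ_le (w := w) h
    omega
  · omega
  · have := offset_succ_le (w := w) h
    omega

theorem sub_offset_succ_add_lt_iff {b b' j j' : ℕ} (hb : b < m) (hb' : b' < m)
    (hj : j < w b) (hj' : j' < w b') :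
    offset w m - offset w (b + 1) + j < offset w m - offset w (b' + 1) + j' ↔
      b' < b ∨ b = b' ∧ j < j' := by
  have := offset_succ_le (w := w) hb
  have := offset_succ_le (w := w) hb'
  rw [offset_succ, offset_succ]
  rcases lt_trichotomy b b' with h | rfl | h
  · have := offset_succ_le (w := w) h
    omega
  · omega
  · have := offset_succ_le (w := w) h
    omega

variable (w m) in
/-- Slot `⟨b, j⟩` is the `j`-th edge of block `b`. -/
abbrev Slot := Σ b : Fin m, Fin (w b)

theorem Slot.ext {p p' : Slot w m} (hb : (p.1 : ℕ) = p'.1) (hj : (p.2 : ℕ) = p'.2) :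
    p = p' := by
  obtain ⟨b, j⟩ := p
  obtain ⟨b', j'⟩ := p'
  obtain rfl : b = b' := Fin.ext hb
  obtain rfl : j = j' := Fin.ext hj
  rfl

theorem card_slot : Fintype.card (Slot w m) = offset w m := by
  simp [Fintype.card_sigma, offset, Fin.sum_univ_eq_sum_range]

theorem offset_add_lt_offset (p : Slot w m) : offset w p.1 + p.2 < offset w m := by
  have := offset_succ_le (w := w) p.1.isLt
  omega

variable (w m) in
/-- Blocks are laid out left to right on the first half of the vertices. -/
def leftPos (p : Slot w m) : Fin (offset w m) :=
  ⟨offset w p.1 + p.2, offset_add_lt_offset p⟩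

variable (w m) in
/-- Blocks are laid out right to left on the second half, so that they nest. -/
def rightPos (p : Slot w m) : Fin (offset w m) :=
  ⟨offset w m - offset w (p.1 + 1) + p.2, by
    have := offset_add_lt_offset p
    have := offset_succ (w := w) p.1
    omega⟩

variable (w m) in
abbrev twistEdge (p : Slot w m) : Fin (offset w m + offset w m) × Fin (offset w m + offset w m) :=
  joinEdge (leftPos w m) (rightPos w m) p

variable {p p' : Slot w m}

theorem leftPos_lt_leftPos_iff :
    leftPos w m p < leftPos w m p' ↔ p.1 < p'.1 ∨ p.1 = p'.1 ∧ (p.2 : ℕ) < p'.2 := by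
  rw [Fin.lt_def, Fin.lt_def, Fin.ext_iff]
  exact offset_add_lt_offset_add_iff p.2.isLt p'.2.isLt

theorem rightPos_lt_rightPos_iff :
    rightPos w m p < rightPos w m p' ↔ p'.1 < p.1 ∨ p.1 = p'.1 ∧ (p.2 : ℕ) < p'.2 := by
  rw [Fin.lt_def, Fin.lt_def, Fin.ext_iff]
  exact sub_offset_succ_add_lt_iff p.1.isLt p'.1.isLt p.2.isLt p'.2.isLt

theorem leftPos_injective : Injective (leftPos w m) := by
  intro p p' h
  have h₁ := leftPos_lt_leftPos_iff (p := p) (p' := p')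
  have h₂ := leftPos_lt_leftPos_iff (p := p') (p' := p)
  simp only [h, lt_self_iff_false, false_iff] at h₁ h₂
  exact Slot.ext (by omega) (by omega)

theorem rightPos_injective : Injective (rightPos w m) := by
  intro p p' h
  have h₁ := rightPos_lt_rightPos_iff (p := p) (p' := p')
  have h₂ := rightPos_lt_rightPos_iff (p := p') (p' := p)
  simp only [h, lt_self_iff_false, false_iff] at h₁ h₂
  exact Slot.ext (by omega) (by omega)

variable (w m) in
/-- The separated matching made of `m` pairwise nested blocks, block `b` being a
`w b`-twist (its edges pairwise cross). -/
def nestedTwists : OGraph := OGraph.ofSides (leftPos w m) (rightPos w m)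

theorem nestedTwists_isMatching : (nestedTwists w m).IsMatching := by
  have hcard : Fintype.card (Slot w m) = Fintype.card (Fin (offset w m)) := by
    rw [card_slot, Fintype.card_fin]
  exact OGraph.ofSides_isMatching
    ((Fintype.bijective_iff_injective_and_card _).mpr ⟨leftPos_injective, hcard⟩)
    ((Fintype.bijective_iff_injective_and_card _).mpr ⟨rightPos_injective, hcard⟩)

theorem up_twistEdge_iff : Up (twistEdge w m p) (twistEdge w m p') ↔
    p.1 = p'.1 ∧ (p.2 : ℕ) < p'.2 := by
  rw [up_joinEdge_iff, leftPos_lt_leftPos_iff, rightPos_lt_rightPos_iff]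
  omega

theorem down_twistEdge_iff : Down (twistEdge w m p) (twistEdge w m p') ↔
    p.1 < p'.1 := by
  rw [down_joinEdge_iff, leftPos_lt_leftPos_iff, rightPos_lt_rightPos_iff]
  omega

theorem cross_twistEdge_iff : Cross (twistEdge w m p) (twistEdge w m p') ↔
    p.1 = p'.1 ∧ (p.2 : ℕ) ≠ p'.2 := by
  rw [cross_joinEdge_iff, leftPos_lt_leftPos_iff, rightPos_lt_rightPos_iff,
    leftPos_lt_leftPos_iff, rightPos_lt_rightPos_iff]
  omega

theorem nest_twistEdge_iff : Nest (twistEdge w m p) (twistEdge w m p') ↔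
    p.1 ≠ p'.1 := by
  rw [nest_joinEdge_iff, leftPos_lt_leftPos_iff, rightPos_lt_rightPos_iff,
    leftPos_lt_leftPos_iff, rightPos_lt_rightPos_iff]
  omega

/-- Blocks `b < q` go to one queue each; the `j`-th edges of the remaining blocks share
stack `j`. -/
theorem nestedTwists_hasLayout {s q : ℕ} (hw : ∀ b : Fin m, q ≤ b → w b ≤ s) :
    (nestedTwists w m).HasLayout s q := by
  refine (OGraph.ofSides_hasLayout_iff _ _).mpr
    ⟨fun p => if (p.1 : ℕ) < q then s + p.1 else p.2, fun p => ?_, fun p p' hpage => ?_⟩ <;>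
    dsimp only at *
  · have := hw p.1
    have := p.2.isLt
    split_ifs <;> omega
  · have := hw p.1
    have := hw p'.1
    have := p.2.isLt
    have := p'.2.isLt
    rw [cross_twistEdge_iff, nest_twistEdge_iff]
    split_ifs at hpage ⊢ <;> omega

theorem nestedTwists_not_hasLayout {s q : ℕ} (hq : q < m)
    (hw : ∀ b : Fin m, b ≤ q → s < w b) :
    ¬ (nestedTwists w m).HasLayout s q := by
  intro h
  obtain ⟨page, hlt, hpage⟩ := (OGraph.ofSides_hasLayout_iff _ _).mp h
  by_cases hstack : ∃ b : Fin m, b ≤ q ∧ ∀ j, page ⟨b, j⟩ < s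
  · obtain ⟨b, hbq, hb⟩ := hstack
    obtain ⟨j, j', hne, heq⟩ := Fintype.exists_ne_map_eq_of_card_lt
      (fun j : Fin (w b) => (⟨page ⟨b, j⟩, hb j⟩ : Fin s)) (by simpa using hw b hbq)
    exact (hpage _ _ (congrArg Fin.val heq)).1 (hb j)
      (cross_twistEdge_iff.mpr ⟨rfl, Fin.val_ne_of_ne hne⟩)
  · push Not at hstack
    choose j hj using hstack
    let block (i : Fin (q + 1)) : Fin m := Fin.castLE hq i
    have hle (i : Fin (q + 1)) : (block i : ℕ) ≤ q := i.is_le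
    let queued (i : Fin (q + 1)) : Slot w m := ⟨block i, j _ (hle i)⟩
    have hqueue i : s ≤ page (queued i) := hj _ (hle i)
    obtain ⟨i, i', hne, heq⟩ := Fintype.exists_ne_map_eq_of_card_lt
      (fun i => (⟨page (queued i) - s, by
        have := hlt (queued i)
        have := hqueue i
        omega⟩ : Fin q)) (by simp)
    have hsame := Fin.mk.inj_iff.mp heq
    have := hqueue i
    have := hqueue i'
    exact (hpage (queued i) (queued i') (by omega)).2 (hqueue i)
      ((nest_twistEdge_iff (p := queued i) (p' := queued i')).mpr
        fun h => hne (Fin.castLE_injective hq h))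

/-- Each row of a diamond lies in one block, which therefore has at least `r` edges, and
the rows lie in strictly increasing blocks. -/
theorem le_card_of_hasDiamond {r : ℕ} (h : (nestedTwists w m).HasDiamond r) :
    r ≤ #{b : Fin m | r ≤ w b} := by
  obtain ⟨e, hmem, -, hup, hdown⟩ := h
  choose P hP using fun i j => OGraph.mem_ofSides.mp (hmem i j)
  change ∀ i j, twistEdge w m (P i j) = e i j at hP
  have hrow i j j' (h : j < j') : (P i j).1 = (P i j').1 ∧ ((P i j).2 : ℕ) < (P i j').2 :=
    up_twistEdge_iff.mp (hP i j ▸ hP i j' ▸ hup i j j' h)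
  have hblock i j : (P i j).1 = (P i i).1 := by
    rcases lt_trichotomy j i with h | rfl | h
    exacts [(hrow i j i h).1, rfl, (hrow i i j h).1.symm]
  have hsize i : r ≤ w (P i i).1 := by
    have hmono : StrictMono fun j => ((P i j).2 : ℕ) := fun j j' h => (hrow i j j' h).2
    simpa using Fintype.card_le_of_injective
      (fun j => (⟨(P i j).2, hblock i j ▸ (P i j).2.isLt⟩ : Fin (w (P i i).1)))
      fun j j' h => hmono.injective (Fin.mk.inj_iff.mp h)
  have hdiag : StrictMono fun i => (P i i).1 := fun i i' h =>
    calc (P i i).1 = (P i i').1 := (hblock i i').symm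
      _ < (P i' i').1 := down_twistEdge_iff.mp (hP i i' ▸ hP i' i' ▸ hdown i' i i' h)
  simpa using card_le_card_of_injOn (s := univ) (fun i => (P i i).1)
    (fun i _ => by simpa using hsize i) hdiag.injective.injOn

end NestedTwists

theorem card_filter_le_two_mul_sub (k : ℕ) : #{b : Fin (2 * k) | k + 1 ≤ 2 * k - b} ≤ k := by
  simpa using card_le_card_of_injOn (t := range k) Fin.val
    (fun b hb => by simp at hb ⊢; omega)
    Fin.val_injective.injOn

theorem exists_matching_no_large_diamond_mn_eq_general (k : ℕ) :
    ∃ M : OGraph, M.IsMatching ∧ M.Separated ∧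
      ¬ M.HasDiamond (k + 1) ∧ M.mn = 2 * k := by
  refine ⟨nestedTwists (fun b => 2 * k - b) (2 * k), nestedTwists_isMatching,
    OGraph.ofSides_separated, fun h => ?_, ?_⟩
  · have := le_card_of_hasDiamond h
    have := card_filter_le_two_mul_sub k
    omega
  · rw [two_mul]
    exact OGraph.mn_eq_of_hasLayout (nestedTwists_hasLayout fun b _ => by omega)
      fun s q hsq => nestedTwists_not_hasLayout (by omega) fun b _ => by omega

/-- For every `k ≥ 1` there is a separated matching with no
`(k+1)`-⋄-pattern whose mixed page number equals `2k`. -/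
theorem exists_matching_no_large_diamond_mn_eq (k : ℕ) (hk : 1 ≤ k) :
    ∃ M : OGraph, M.IsMatching ∧ M.Separated ∧
      ¬ M.HasDiamond (k + 1) ∧ M.mn = 2 * k :=
  exists_matching_no_large_diamond_mn_eq_general k

end MixedLayouts
end

section
/- Let M be a matching with a separated layout whose edge set forms a k⁷-⋄-pattern. Then M contains a k-thick pattern. -/
namespace MixedLayouts

/-! ### Auxiliary development for Statement 7 -/

section ThickAux

open Finset

lemma snd_inj {M : OGraph} (hmatch : M.IsMatching) {a b : Fin M.n × Fin M.n}
    (ha : a ∈ M.E) (hb : b ∈ M.E) (h2 : a.2 = b.2) : a = b := by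
  by_contra hne
  have hv := hmatch a.2
  have h1 : 1 < (M.E.filter fun e => e.1 = a.2 ∨ e.2 = a.2).card := by
    apply Finset.one_lt_card.mpr
    refine ⟨a, ?_, b, ?_, hne⟩
    · simp [Finset.mem_filter, ha]
    · simp [Finset.mem_filter, hb, h2.symm]
  rw [OGraph.degree] at hv
  omega

/-- Bundles a `k⁷`-⋄-pattern inside a separated matching, `k ≥ 2`. -/
structure DCfg (M : OGraph) (k : ℕ) : Type where
  ee : Fin (k ^ 7) → Fin (k ^ 7) → Fin M.n × Fin M.n
  hk : 2 ≤ k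
  hinj : Function.Injective fun p : Fin (k ^ 7) × Fin (k ^ 7) => ee p.1 p.2
  hrow : ∀ i j j' : Fin (k ^ 7), j < j' → Up (ee i j) (ee i j')
  hcol : ∀ j i i' : Fin (k ^ 7), i < i' → Down (ee i j) (ee i' j)
  hmem : ∀ i j, ee i j ∈ M.E
  tsep : ℕ
  hsep : ∀ e ∈ M.E, (e.1 : ℕ) < tsep ∧ tsep ≤ (e.2 : ℕ)
  hmatch : M.IsMatching

namespace DCfg

variable {M : OGraph} {k : ℕ} (C : DCfg M k)

lemma kpos (C : DCfg M k) : 0 < k := lt_of_lt_of_le two_pos C.hk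

lemma Kpos (C : DCfg M k) : 0 < k ^ 7 := pow_pos C.kpos 7

/-- Total (ℕ-indexed) version of the diamond edges, via `mod`. -/
def eN (i j : ℕ) : Fin M.n × Fin M.n :=
  C.ee ⟨i % k ^ 7, Nat.mod_lt _ C.Kpos⟩ ⟨j % k ^ 7, Nat.mod_lt _ C.Kpos⟩

lemma eN_eq {i j : ℕ} (hi : i < k ^ 7) (hj : j < k ^ 7) :
    C.eN i j = C.ee ⟨i, hi⟩ ⟨j, hj⟩ := by
  unfold eN
  congr 1 <;> exact Fin.ext (Nat.mod_eq_of_lt (by assumption))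

lemma eN_mem (i j : ℕ) : C.eN i j ∈ M.E := C.hmem _ _

/-- Rank (as a natural number) of the first endpoint. -/
def XX (i j : ℕ) : ℕ := ((C.eN i j).1 : ℕ)

/-- Rank of the second endpoint. -/
def YY (i j : ℕ) : ℕ := ((C.eN i j).2 : ℕ)

lemma eN_injOn {i j i' j' : ℕ} (hi : i < k ^ 7) (hj : j < k ^ 7)
    (hi' : i' < k ^ 7) (hj' : j' < k ^ 7) (h : C.eN i j = C.eN i' j') :
    i = i' ∧ j = j' := by
  rw [C.eN_eq hi hj, C.eN_eq hi' hj'] at h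
  have := C.hinj (a₁ := (⟨i, hi⟩, ⟨j, hj⟩)) (a₂ := (⟨i', hi'⟩, ⟨j', hj'⟩)) h
  refine ⟨?_, ?_⟩
  · exact congrArg (fun p => (p.1 : ℕ)) this
  · exact congrArg (fun p => (p.2 : ℕ)) this

lemma XX_lt_col {i j j' : ℕ} (hi : i < k ^ 7) (hjj : j < j') (hj' : j' < k ^ 7) :
    C.XX i j < C.XX i j' := by
  have hj : j < k ^ 7 := lt_trans hjj hj'
  have h := C.hrow ⟨i, hi⟩ ⟨j, hj⟩ ⟨j', hj'⟩ hjj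
  unfold XX
  rw [C.eN_eq hi hj, C.eN_eq hi hj']
  exact Fin.lt_def.mp h.1

lemma XX_lt_row {i i' j : ℕ} (hii : i < i') (hi' : i' < k ^ 7) (hj : j < k ^ 7) :
    C.XX i j < C.XX i' j := by
  have hi : i < k ^ 7 := lt_trans hii hi'
  have h := C.hcol ⟨j, hj⟩ ⟨i, hi⟩ ⟨i', hi'⟩ hii
  unfold XX
  rw [C.eN_eq hi hj, C.eN_eq hi' hj]
  exact Fin.lt_def.mp h.1

lemma YY_lt_col {i j j' : ℕ} (hi : i < k ^ 7) (hjj : j < j') (hj' : j' < k ^ 7) :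
    C.YY i j < C.YY i j' := by
  have hj : j < k ^ 7 := lt_trans hjj hj'
  have h := C.hrow ⟨i, hi⟩ ⟨j, hj⟩ ⟨j', hj'⟩ hjj
  unfold YY
  rw [C.eN_eq hi hj, C.eN_eq hi hj']
  exact Fin.lt_def.mp h.2

lemma YY_lt_row {i i' j : ℕ} (hii : i < i') (hi' : i' < k ^ 7) (hj : j < k ^ 7) :
    C.YY i' j < C.YY i j := by
  have hi : i < k ^ 7 := lt_trans hii hi'
  have h := C.hcol ⟨j, hj⟩ ⟨i, hi⟩ ⟨i', hi'⟩ hii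
  unfold YY
  rw [C.eN_eq hi hj, C.eN_eq hi' hj]
  exact Fin.lt_def.mp h.2

lemma YY_le_col {i j j' : ℕ} (hi : i < k ^ 7) (hjj : j ≤ j') (hj' : j' < k ^ 7) :
    C.YY i j ≤ C.YY i j' := by
  rcases eq_or_lt_of_le hjj with h | h
  · subst h; exact le_refl _
  · exact le_of_lt (C.YY_lt_col hi h hj')

lemma YY_le_row {i i' j : ℕ} (hii : i ≤ i') (hi' : i' < k ^ 7) (hj : j < k ^ 7) :
    C.YY i' j ≤ C.YY i j := by
  rcases eq_or_lt_of_le hii with h | h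
  · subst h; exact le_refl _
  · exact le_of_lt (C.YY_lt_row h hi' hj)

lemma XX_lt {i j i' j' : ℕ} (hii : i ≤ i') (hjj : j ≤ j') (hne : i < i' ∨ j < j')
    (hi' : i' < k ^ 7) (hj' : j' < k ^ 7) : C.XX i j < C.XX i' j' := by
  rcases hne with h | h
  · rcases eq_or_lt_of_le hjj with hj | hj
    · subst hj; exact C.XX_lt_row h hi' (lt_of_le_of_lt (le_refl _) hj')
    · exact lt_trans (C.XX_lt_row h hi' (lt_trans hj hj')) (C.XX_lt_col hi' hj hj')
  · rcases eq_or_lt_of_le hii with hi | hi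
    · subst hi; exact C.XX_lt_col (lt_of_le_of_lt (le_refl _) hi') h hj'
    · exact lt_trans (C.XX_lt_col (lt_trans hi hi') h hj') (C.XX_lt_row hi hi' hj')

lemma YY_ne {i j i' j' : ℕ} (hi : i < k ^ 7) (hj : j < k ^ 7)
    (hi' : i' < k ^ 7) (hj' : j' < k ^ 7) (hne : ¬(i = i' ∧ j = j')) :
    C.YY i j ≠ C.YY i' j' := by
  intro h
  have hEq : C.eN i j = C.eN i' j' := by
    apply snd_inj C.hmatch (C.eN_mem i j) (C.eN_mem i' j')
    exact Fin.ext h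
  exact hne (C.eN_injOn hi hj hi' hj' hEq)

/-- Crossing from strict increase of both coordinates, using separation. -/
lemma cross_of {i j i' j' : ℕ} (hx : C.XX i j < C.XX i' j')
    (hy : C.YY i j < C.YY i' j') : Cross (C.eN i j) (C.eN i' j') := by
  left
  refine ⟨Fin.lt_def.mpr hx, ?_, Fin.lt_def.mpr hy⟩
  have h1 := C.hsep _ (C.eN_mem i' j')
  have h2 := C.hsep _ (C.eN_mem i j)
  exact Fin.lt_def.mpr (lt_of_lt_of_le h1.1 h2.2)

lemma cross_symm {e f : Fin M.n × Fin M.n} (h : Cross e f) : Cross f e := by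
  rcases h with h | h
  · exact Or.inr h
  · exact Or.inl h

lemma nest_symm {e f : Fin M.n × Fin M.n} (h : Nest e f) : Nest f e := by
  rcases h with h | h
  · exact Or.inr h
  · exact Or.inl h

/-- Nesting from `x` increasing, `y` decreasing. -/
lemma nest_of {i j i' j' : ℕ} (hx : C.XX i j < C.XX i' j')
    (hy : C.YY i' j' < C.YY i j) : Nest (C.eN i j) (C.eN i' j') :=
  Or.inl ⟨Fin.lt_def.mpr hx, Fin.lt_def.mpr hy⟩

/-! #### Twist chains and their height function -/

/-- A cell `(i, j)` with room for a `k`-block in both directions. -/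
def Valid (_C : DCfg M k) (p : ℕ × ℕ) : Prop := p.1 + k ≤ k ^ 7 ∧ p.2 + k ≤ k ^ 7

/-- One step of a twist chain of vertical `k`-blocks. -/
def StepR (q p : ℕ × ℕ) : Prop :=
  C.Valid q ∧ C.Valid p ∧ q.1 + k ≤ p.1 ∧ q.2 < p.2 ∧
    C.YY q.1 q.2 < C.YY (p.1 + (k - 1)) p.2

/-- There is a twist chain of `L` vertical blocks ending at `p`. -/
def ChainEnd (L : ℕ) (p : ℕ × ℕ) : Prop :=
  1 ≤ L ∧ ∃ c : ℕ → ℕ × ℕ, c (L - 1) = p ∧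
    (∀ g, g + 1 < L → C.StepR (c g) (c (g + 1))) ∧ (∀ g, g < L → C.Valid (c g))

lemma chainEnd_one {p : ℕ × ℕ} (h : C.Valid p) : C.ChainEnd 1 p :=
  ⟨le_refl 1, fun _ => p, rfl, fun _ hg => absurd hg (by omega), fun _ _ => h⟩

lemma chainEnd_le {L : ℕ} {p : ℕ × ℕ} (h : C.ChainEnd L p) : L ≤ k ^ 7 := by
  obtain ⟨hL, c, hc, hstep, hval⟩ := h
  have hrow : ∀ g, g < L → g ≤ (c g).1 := by
    intro g
    induction g with
    | zero => intro _; exact Nat.zero_le _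
    | succ n ih =>
      intro hg
      have h1 := hstep n (by omega)
      have h2 := ih (by omega)
      have := h1.2.2.1
      have hk2 := C.hk
      omega
  have h1 := hrow (L - 1) (by omega)
  have h2 := (hval (L - 1) (by omega)).1
  have hk2 := C.hk
  omega

lemma chain_bdd (p : ℕ × ℕ) : BddAbove {L | C.ChainEnd L p} :=
  ⟨k ^ 7, fun _ hL => C.chainEnd_le hL⟩

/-- Height: the longest twist chain ending at `p`. -/
noncomputable def T (p : ℕ × ℕ) : ℕ := sSup {L | C.ChainEnd L p}

lemma T_spec {p : ℕ × ℕ} (h : C.Valid p) : C.ChainEnd (C.T p) p :=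
  Nat.sSup_mem ⟨1, C.chainEnd_one h⟩ (C.chain_bdd p)

lemma le_T {L : ℕ} {p : ℕ × ℕ} (h : C.ChainEnd L p) : L ≤ C.T p :=
  le_csSup (C.chain_bdd p) h

lemma one_le_T {p : ℕ × ℕ} (h : C.Valid p) : 1 ≤ C.T p :=
  C.le_T (C.chainEnd_one h)

lemma T_step {q p : ℕ × ℕ} (h : C.StepR q p) : C.T q + 1 ≤ C.T p := by
  obtain ⟨hL, c, hc, hstep, hval⟩ := C.T_spec h.1
  set L := C.T q with hLdef
  apply C.le_T
  refine ⟨by omega, fun g => if g < L then c g else p, ?_, ?_, ?_⟩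
  · show (if L + 1 - 1 < L then c (L + 1 - 1) else p) = p
    rw [if_neg (by omega)]
  · intro g hg
    show C.StepR (if g < L then c g else p) (if g + 1 < L then c (g + 1) else p)
    rcases lt_or_ge (g + 1) L with h1 | h1
    · rw [if_pos (by omega), if_pos h1]
      exact hstep g h1
    · have hgL : g + 1 = L := by omega
      rw [if_pos (by omega), if_neg (by omega)]
      have hgeq : g = L - 1 := by omega
      rw [hgeq, hc]
      exact h
  · intro g hg
    show C.Valid (if g < L then c g else p)
    rcases lt_or_ge g L with h1 | h1
    · rw [if_pos h1]; exact hval g h1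
    · rw [if_neg (by omega)]; exact h.2.1

/-- Pairwise separation along a twist chain. -/
lemma chain_pairwise {L : ℕ} {p : ℕ × ℕ} (h : C.ChainEnd L p) :
    ∃ c : ℕ → ℕ × ℕ, (∀ g, g < L → C.Valid (c g)) ∧
      ∀ g g', g < g' → g' < L →
        (c g).1 + k ≤ (c g').1 ∧ (c g).2 < (c g').2 ∧
          C.YY (c g).1 (c g).2 < C.YY ((c g').1 + (k - 1)) (c g').2 := by
  obtain ⟨hL, c, hc, hstep, hval⟩ := h
  refine ⟨c, hval, ?_⟩
  intro g g' hgg'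
  induction g' with
  | zero => omega
  | succ m ih =>
    intro hm
    have hs := hstep m (by omega)
    rcases eq_or_lt_of_le (Nat.succ_le_of_lt hgg') with he | hlt
    · -- g + 1 = m + 1, i.e. g = m : single step
      have : g = m := by omega
      subst this
      exact ⟨hs.2.2.1, hs.2.2.2.1, hs.2.2.2.2⟩
    · -- g < m
      have hgm : g < m := by omega
      obtain ⟨h1, h2, h3⟩ := ih hgm (by omega)
      have hvm := hval m (by omega)
      have hkk := C.hk
      have hs1 := hs.2.2.1
      have hs2 := hs.2.2.2.1
      have hvm1 := hvm.1
      have hvm2 := hvm.2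
      refine ⟨by omega, by omega, ?_⟩
      calc C.YY (c g).1 (c g).2
        < C.YY ((c m).1 + (k - 1)) (c m).2 := h3
        _ ≤ C.YY (c m).1 (c m).2 := C.YY_le_row (by omega) (by omega) (by omega)
        _ < C.YY ((c (m+1)).1 + (k - 1)) (c (m+1)).2 := hs.2.2.2.2

lemma down_eN_col {i i' j : ℕ} (hii : i < i') (hi' : i' < k ^ 7) (hj : j < k ^ 7) :
    Down (C.eN i j) (C.eN i' j) := by
  have hi : i < k ^ 7 := lt_trans hii hi'
  rw [C.eN_eq hi hj, C.eN_eq hi' hj]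
  exact C.hcol ⟨j, hj⟩ ⟨i, hi⟩ ⟨i', hi'⟩ hii

lemma up_eN_row {i j j' : ℕ} (hjj : j < j') (hi : i < k ^ 7) (hj' : j' < k ^ 7) :
    Up (C.eN i j) (C.eN i j') := by
  have hj : j < k ^ 7 := lt_trans hjj hj'
  rw [C.eN_eq hi hj, C.eN_eq hi hj']
  exact C.hrow ⟨i, hi⟩ ⟨j, hj⟩ ⟨j', hj'⟩ hjj

/-- A twist chain of height at least `k` yields a `k`-thick `k`-twist. -/
lemma twist_of_T {p : ℕ × ℕ} (hv : C.Valid p) (hT : k ≤ C.T p) :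
    M.HasThickTwist k k := by
  obtain ⟨c, hval, hpair⟩ := C.chain_pairwise (C.T_spec hv)
  set L := C.T p with hL
  have hkk := C.hk
  have hvf : ∀ g : Fin k, C.Valid (c g) := fun g => hval g (by omega)
  have hrow_bound : ∀ (g : Fin k) (s : Fin k), (c (g : ℕ)).1 + (s : ℕ) < k ^ 7 := by
    intro g s
    have h1 := (hvf g).1
    omega
  have hcol_bound : ∀ g : Fin k, (c (g : ℕ)).2 < k ^ 7 := by
    intro g
    have h1 := (hvf g).2
    omega
  have hsep_pair : ∀ g g' : Fin k, (g : ℕ) < (g' : ℕ) →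
      (c (g : ℕ)).1 + k ≤ (c (g' : ℕ)).1 ∧ (c (g : ℕ)).2 < (c (g' : ℕ)).2 ∧
        C.YY (c (g : ℕ)).1 (c (g : ℕ)).2 <
          C.YY ((c (g' : ℕ)).1 + (k - 1)) (c (g' : ℕ)).2 := by
    intro g g' h
    exact hpair g g' h (by omega)
  refine ⟨fun g s => C.eN ((c (g : ℕ)).1 + (s : ℕ)) (c (g : ℕ)).2,
    fun _ _ => C.eN_mem _ _, ?_, ?_, ?_⟩
  · -- injectivity
    intro a b hab
    simp only at hab
    obtain ⟨h1, h2⟩ := C.eN_injOn (hrow_bound a.1 a.2) (hcol_bound a.1)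
      (hrow_bound b.1 b.2) (hcol_bound b.1) hab
    have hgg : a.1 = b.1 := by
      rcases lt_trichotomy (a.1 : ℕ) (b.1 : ℕ) with h | h | h
      · have := (hsep_pair a.1 b.1 h).1
        have ha2 : (a.2 : ℕ) < k := a.2.isLt
        omega
      · exact Fin.ext h
      · have := (hsep_pair b.1 a.1 h).1
        have hb2 : (b.2 : ℕ) < k := b.2.isLt
        omega
    have hss : a.2 = b.2 := by
      rw [hgg] at h1
      exact Fin.ext (by omega)
    exact Prod.ext hgg hss
  · -- within a group: nesting
    intro g s s' hne
    have hne' : (s : ℕ) ≠ (s' : ℕ) := fun h => hne (Fin.ext h)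
    rcases lt_or_gt_of_ne hne' with h | h
    · exact Or.inl (C.down_eN_col (by omega) (hrow_bound g s') (hcol_bound g))
    · have hd := C.down_eN_col (i := (c (g : ℕ)).1 + (s' : ℕ))
        (i' := (c (g : ℕ)).1 + (s : ℕ)) (by omega) (hrow_bound g s) (hcol_bound g)
      exact Or.inr ⟨hd.1, hd.2⟩
  · -- across groups: crossing
    intro g g' s s' hne
    have hne' : (g : ℕ) ≠ (g' : ℕ) := fun h => hne (Fin.ext h)
    rcases lt_or_gt_of_ne hne' with h | h
    · obtain ⟨ha, hb, hc2⟩ := hsep_pair g g' h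
      apply C.cross_of
      · apply C.XX_lt (by omega) (le_of_lt hb) (Or.inl (by omega))
          (hrow_bound g' s') (hcol_bound g')
      · calc C.YY ((c (g : ℕ)).1 + (s : ℕ)) (c (g : ℕ)).2
          ≤ C.YY (c (g : ℕ)).1 (c (g : ℕ)).2 :=
            C.YY_le_row (by omega) (hrow_bound g s) (hcol_bound g)
          _ < C.YY ((c (g' : ℕ)).1 + (k - 1)) (c (g' : ℕ)).2 := hc2
          _ ≤ C.YY ((c (g' : ℕ)).1 + (s' : ℕ)) (c (g' : ℕ)).2 := by
            apply C.YY_le_row (by omega) ?_ (hcol_bound g')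
            have := (hvf g').1
            omega
    · obtain ⟨ha, hb, hc2⟩ := hsep_pair g' g h
      apply cross_symm
      apply C.cross_of
      · apply C.XX_lt (by omega) (le_of_lt hb) (Or.inl (by omega))
          (hrow_bound g s) (hcol_bound g)
      · calc C.YY ((c (g' : ℕ)).1 + (s' : ℕ)) (c (g' : ℕ)).2
          ≤ C.YY (c (g' : ℕ)).1 (c (g' : ℕ)).2 :=
            C.YY_le_row (by omega) (hrow_bound g' s') (hcol_bound g')
          _ < C.YY ((c (g : ℕ)).1 + (k - 1)) (c (g : ℕ)).2 := hc2
          _ ≤ C.YY ((c (g : ℕ)).1 + (s : ℕ)) (c (g : ℕ)).2 := by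
            apply C.YY_le_row (by omega) ?_ (hcol_bound g)
            have := (hvf g).1
            omega

/-! #### Diagonal anchors and the rainbow extraction -/

/-- Anchor cells: `j` steps in direction `(-(k-1), k-1)` from `(3kt + k², 3kt)`. -/
def cellA (_C : DCfg M k) (t j : ℕ) : ℕ × ℕ :=
  (3 * k * t + k * k - j * (k - 1), 3 * k * t + j * (k - 1))

lemma mul3 {s t : ℕ} (h : s < t) : 3 * k * s + 3 * k ≤ 3 * k * t := by
  have h1 : 3 * k * (s + 1) ≤ 3 * k * t := Nat.mul_le_mul_left (3 * k) (by omega)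
  have h2 : 3 * k * (s + 1) = 3 * k * s + 3 * k := by ring
  omega

lemma jmul_le {j : ℕ} (hj : j ≤ k - 1) (hk : 2 ≤ k) : j * (k - 1) + (k - 1) ≤ k * k := by
  obtain ⟨m, rfl⟩ : ∃ m, k = m + 2 := ⟨k - 2, by omega⟩
  have h0 : m + 2 - 1 = m + 1 := by omega
  rw [h0] at hj ⊢
  have h1 : j * (m + 1) ≤ (m + 1) * (m + 1) := Nat.mul_le_mul_right _ hj
  nlinarith

lemma arith1 (C : DCfg M k) {t : ℕ} (ht : t < k ^ 4) : 3 * k * t + k * k + k ≤ k ^ 7 := by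
  have hkk := C.hk
  have h1 : k * (t + 1) ≤ k * k ^ 4 := Nat.mul_le_mul_left _ (by omega)
  have h2 : k * k ^ 4 = k ^ 5 := by ring
  have h3 : k ^ 5 * (k * k) = k ^ 7 := by ring
  have h4 : 4 ≤ k * k := by nlinarith
  have h5 : k * k ≤ k ^ 5 := by
    calc k * k = k ^ 2 := by ring
    _ ≤ k ^ 5 := Nat.pow_le_pow_right (by omega) (by omega)
  have h6 : k * t + k ≤ k ^ 5 := by
    have : k * (t + 1) = k * t + k := by ring
    omega
  nlinarith

lemma validA (C : DCfg M k) {t j : ℕ} (ht : t < k ^ 4) (hj : j ≤ k - 1) :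
    C.Valid (C.cellA t j) := by
  have h1 := jmul_le (k := k) hj C.hk
  have h2 := C.arith1 ht
  have hkk := C.hk
  constructor
  · show 3 * k * t + k * k - j * (k - 1) + k ≤ k ^ 7
    omega
  · show 3 * k * t + j * (k - 1) + k ≤ k ^ 7
    omega

lemma exists_j (C : DCfg M k) (hno : ∀ p, C.Valid p → C.T p ≤ k - 1) (t : ℕ) :
    ∃ j : ℕ, t < k ^ 4 →
      (j + 1 ≤ k - 1 ∧ C.T (C.cellA t (j + 1)) ≤ C.T (C.cellA t j)) := by
  have hkk := C.hk
  by_cases ht : t < k ^ 4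
  · by_contra hcon
    push_neg at hcon
    have grow : ∀ j, j ≤ k - 1 → j + 1 ≤ C.T (C.cellA t j) := by
      intro j
      induction j with
      | zero => intro _; exact C.one_le_T (C.validA ht (by omega))
      | succ m ih =>
        intro hm
        have h1 := (hcon m).2 (by omega)
        have h2 := ih (by omega)
        omega
    have hbig := grow (k - 1) (le_refl _)
    have hb := hno _ (C.validA ht (le_refl _))
    omega
  · exact ⟨0, fun h => absurd h ht⟩

/-- The key extraction: no `k`-thick twist forces a `k`-thick rainbow. -/
lemma rainbow_of_no_twist (hno : ∀ p, C.Valid p → C.T p ≤ k - 1) :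
    M.HasThickRainbow k k := by
  have hkk := C.hk
  choose jf hjf using C.exists_j hno
  set f : ℕ → ℕ × ℕ × ℕ :=
    fun t => (jf t, C.T (C.cellA t (jf t)), C.T (C.cellA t (jf t + 1))) with hfdef
  have hmaps : ∀ t ∈ Finset.range (k ^ 4),
      f t ∈ (Finset.range (k - 1)) ×ˢ ((Finset.range k) ×ˢ (Finset.range k)) := by
    intro t ht
    rw [Finset.mem_range] at ht
    obtain ⟨hj1, _⟩ := hjf t ht
    have hT1 := hno _ (C.validA ht (show jf t ≤ k - 1 by omega))
    have hT2 := hno _ (C.validA ht hj1)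
    simp only [Finset.mem_product, Finset.mem_range, hfdef]
    exact ⟨by omega, by omega, by omega⟩
  have hcard : ((Finset.range (k - 1)) ×ˢ ((Finset.range k) ×ˢ (Finset.range k))).card
      * (k - 1) < (Finset.range (k ^ 4)).card := by
    simp only [Finset.card_product, Finset.card_range]
    obtain ⟨m, rfl⟩ : ∃ m, k = m + 2 := ⟨k - 2, by omega⟩
    have h0 : m + 2 - 1 = m + 1 := by omega
    rw [h0]
    have : (m + 2) ^ 4 = (m+2)*(m+2)*(m+2)*(m+2) := by ring
    rw [this]
    nlinarith [Nat.zero_le m]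
  obtain ⟨y, hy, hfib⟩ :=
    Finset.exists_lt_card_fiber_of_mul_lt_card_of_maps_to hmaps hcard
  obtain ⟨j₀, a₀, b₀⟩ := y
  set F := (Finset.range (k ^ 4)).filter (fun t => f t = (j₀, a₀, b₀)) with hFdef
  have hFk : k ≤ F.card := by omega
  obtain ⟨F', hF'sub, hF'card⟩ := Finset.exists_subset_card_eq hFk
  have hmemF : ∀ t ∈ F', t < k ^ 4 ∧ jf t = j₀ ∧
      C.T (C.cellA t j₀) = a₀ ∧ C.T (C.cellA t (j₀ + 1)) = b₀ := by
    intro t ht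
    have h1 := hF'sub ht
    rw [hFdef, Finset.mem_filter, Finset.mem_range] at h1
    obtain ⟨h2, h3⟩ := h1
    rw [hfdef] at h3
    have hj : jf t = j₀ := congrArg (fun p => p.1) h3
    have ha : C.T (C.cellA t (jf t)) = a₀ := congrArg (fun p => p.2.1) h3
    have hb : C.T (C.cellA t (jf t + 1)) = b₀ := congrArg (fun p => p.2.2) h3
    rw [hj] at ha hb
    exact ⟨h2, hj, ha, hb⟩
  -- j₀ is a valid step index, and b₀ ≤ a₀
  have hF'ne : F'.Nonempty := by
    rw [← Finset.card_pos, hF'card]; omega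
  obtain ⟨t₀, ht₀⟩ := hF'ne
  have hj₀ : j₀ + 1 ≤ k - 1 ∧ b₀ ≤ a₀ := by
    obtain ⟨h1, h2, h3, h4⟩ := hmemF t₀ ht₀
    obtain ⟨h5, h6⟩ := hjf t₀ h1
    rw [h2] at h5 h6
    rw [h3, h4] at h6
    exact ⟨h5, h6⟩
  have hQ : j₀ * (k - 1) + (k - 1) ≤ k * k := jmul_le (by omega) hkk
  -- the blocking inequality
  have key : ∀ s t : ℕ, s ∈ F' → t ∈ F' → s < t →
      C.YY (C.cellA t j₀).1 ((C.cellA t j₀).2 + (k - 1)) <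
        C.YY (C.cellA s j₀).1 (C.cellA s j₀).2 := by
    intro s t hsF htF hst
    obtain ⟨hs4, _, hsa, _⟩ := hmemF s hsF
    obtain ⟨ht4, _, _, htb⟩ := hmemF t htF
    have h3k := mul3 (k := k) hst
    have hvs := C.validA hs4 (show j₀ ≤ k - 1 by omega)
    have hvt := C.validA ht4 (show j₀ + 1 ≤ k - 1 from hj₀.1)
    have hvt0 := C.validA ht4 (show j₀ ≤ k - 1 by omega)
    have hvs1 := hvs.1
    have hvs2 := hvs.2
    have hvt1 := hvt0.1
    have hvt2 := hvt0.2
    have hQ1 : (j₀ + 1) * (k - 1) = j₀ * (k - 1) + (k - 1) := by ring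
    -- coordinates
    have hrowW : (C.cellA t (j₀ + 1)).1 + (k - 1) = (C.cellA t j₀).1 := by
      show 3 * k * t + k * k - (j₀ + 1) * (k - 1) + (k - 1)
        = 3 * k * t + k * k - j₀ * (k - 1)
      rw [hQ1]; omega
    have hcolW : (C.cellA t (j₀ + 1)).2 = (C.cellA t j₀).2 + (k - 1) := by
      show 3 * k * t + (j₀ + 1) * (k - 1) = 3 * k * t + j₀ * (k - 1) + (k - 1)
      rw [hQ1]; omega
    -- the two cells are distinct (different rows)
    have hrowlt : (C.cellA s j₀).1 < (C.cellA t j₀).1 := by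
      show 3 * k * s + k * k - j₀ * (k - 1) < 3 * k * t + k * k - j₀ * (k - 1)
      omega
    by_contra hcon
    push_neg at hcon
    have hne : C.YY (C.cellA s j₀).1 (C.cellA s j₀).2
        ≠ C.YY (C.cellA t j₀).1 ((C.cellA t j₀).2 + (k - 1)) := by
      apply C.YY_ne (by omega) (by omega) (by omega) (by omega)
      intro hphmm
      omega
    have hlt : C.YY (C.cellA s j₀).1 (C.cellA s j₀).2
        < C.YY (C.cellA t j₀).1 ((C.cellA t j₀).2 + (k - 1)) := by
      rcases lt_or_eq_of_le hcon with h | h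
      · exact h
      · exact absurd h hne
    have hstep : C.StepR (C.cellA s j₀) (C.cellA t (j₀ + 1)) := by
      refine ⟨hvs, hvt, ?_, ?_, ?_⟩
      · show 3 * k * s + k * k - j₀ * (k - 1) + k
          ≤ 3 * k * t + k * k - (j₀ + 1) * (k - 1)
        rw [hQ1]; omega
      · show 3 * k * s + j₀ * (k - 1) < 3 * k * t + (j₀ + 1) * (k - 1)
        rw [hQ1]; omega
      · rw [hrowW, hcolW]
        exact hlt
    have := C.T_step hstep
    rw [hsa, htb] at this
    omega
  -- strictly monotone enumeration of F'
  let emb := F'.orderEmbOfFin hF'card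
  have hembmem : ∀ i : Fin k, (emb i : ℕ) ∈ F' := fun i =>
    F'.orderEmbOfFin_mem hF'card i
  have hembmono : ∀ i i' : Fin k, i < i' → (emb i : ℕ) < (emb i' : ℕ) := by
    intro i i' h
    exact (OrderEmbedding.lt_iff_lt _).mpr h
  -- bounds for the cells used
  have hvA : ∀ i : Fin k, C.Valid (C.cellA (emb i) j₀) := by
    intro i
    exact C.validA (hmemF _ (hembmem i)).1 (by omega)
  have hrb : ∀ i : Fin k, (C.cellA (emb i) j₀).1 < k ^ 7 := by
    intro i
    have := (hvA i).1
    omega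
  have hcb : ∀ (i : Fin k) (s : ℕ), s ≤ k - 1 → (C.cellA (emb i) j₀).2 + s < k ^ 7 := by
    intro i s hs
    have := (hvA i).2
    omega
  -- rows strictly increase, columns are far apart
  have hrowmono : ∀ i i' : Fin k, i < i' →
      (C.cellA (emb i) j₀).1 < (C.cellA (emb i') j₀).1 := by
    intro i i' h
    have h3k := mul3 (k := k) (hembmono i i' h)
    show 3 * k * (emb i) + k * k - j₀ * (k - 1)
      < 3 * k * (emb i') + k * k - j₀ * (k - 1)
    omega
  have hcolfar : ∀ i i' : Fin k, i < i' →
      (C.cellA (emb i) j₀).2 + (k - 1) < (C.cellA (emb i') j₀).2 := by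
    intro i i' h
    have h3k := mul3 (k := k) (hembmono i i' h)
    show 3 * k * (emb i) + j₀ * (k - 1) + (k - 1)
      < 3 * k * (emb i') + j₀ * (k - 1)
    omega
  refine ⟨fun i s => C.eN (C.cellA (emb i) j₀).1 ((C.cellA (emb i) j₀).2 + (s : ℕ)),
    fun _ _ => C.eN_mem _ _, ?_, ?_, ?_⟩
  · -- injectivity
    intro a b hab
    simp only at hab
    obtain ⟨h1, h2⟩ := C.eN_injOn (hrb a.1) (hcb a.1 a.2 (by have := a.2.isLt; omega))
      (hrb b.1) (hcb b.1 b.2 (by have := b.2.isLt; omega)) hab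
    have hgg : a.1 = b.1 := by
      rcases lt_trichotomy a.1 b.1 with h | h | h
      · have := hrowmono a.1 b.1 h; omega
      · exact h
      · have := hrowmono b.1 a.1 h; omega
    have hss : a.2 = b.2 := by
      rw [hgg] at h2
      exact Fin.ext (by omega)
    exact Prod.ext hgg hss
  · -- within a group: crossing
    intro i s s' hne
    have hne' : (s : ℕ) ≠ (s' : ℕ) := fun h => hne (Fin.ext h)
    have hib := hrb i
    rcases lt_or_gt_of_ne hne' with h | h
    · exact C.cross_of
        (C.XX_lt_col hib (by omega) (hcb i s' (by have := s'.isLt; omega)))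
        (C.YY_lt_col hib (by omega) (hcb i s' (by have := s'.isLt; omega)))
    · apply cross_symm
      exact C.cross_of
        (C.XX_lt_col hib (by omega) (hcb i s (by have := s.isLt; omega)))
        (C.YY_lt_col hib (by omega) (hcb i s (by have := s.isLt; omega)))
  · -- across groups: nesting
    intro i i' s s' hne
    have hne' : i ≠ i' := hne
    have main : ∀ u u' : Fin k, u < u' → ∀ v v' : Fin k,
        Nest (C.eN (C.cellA (emb u) j₀).1 ((C.cellA (emb u) j₀).2 + (v : ℕ)))
          (C.eN (C.cellA (emb u') j₀).1 ((C.cellA (emb u') j₀).2 + (v' : ℕ))) := by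
      intro u u' hu v v'
      have hv'le : (v' : ℕ) ≤ k - 1 := by have := v'.isLt; omega
      have hvle : (v : ℕ) ≤ k - 1 := by have := v.isLt; omega
      have hx : C.XX (C.cellA (emb u) j₀).1 ((C.cellA (emb u) j₀).2 + (v : ℕ))
          < C.XX (C.cellA (emb u') j₀).1 ((C.cellA (emb u') j₀).2 + (v' : ℕ)) := by
        apply C.XX_lt (le_of_lt (hrowmono u u' hu)) ?_ (Or.inl (hrowmono u u' hu))
          (hrb u') (hcb u' v' hv'le)
        have h1 := hcolfar u u' hu
        omega
      have hy1 : C.YY (C.cellA (emb u') j₀).1 ((C.cellA (emb u') j₀).2 + (v' : ℕ))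
          ≤ C.YY (C.cellA (emb u') j₀).1 ((C.cellA (emb u') j₀).2 + (k - 1)) :=
        C.YY_le_col (hrb u') (by omega) (hcb u' (k - 1) (le_refl _))
      have hy2 := key _ _ (hembmem u) (hembmem u') (hembmono u u' hu)
      have hy3 : C.YY (C.cellA (emb u) j₀).1 (C.cellA (emb u) j₀).2
          ≤ C.YY (C.cellA (emb u) j₀).1 ((C.cellA (emb u) j₀).2 + (v : ℕ)) :=
        C.YY_le_col (hrb u) (by omega) (hcb u v hvle)
      exact C.nest_of hx (by omega)
    rcases lt_or_gt_of_ne hne' with h | h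
    · exact main i i' h s s'
    · exact nest_symm (main i' i h s' s)

end DCfg

end ThickAux

/-- If the edge set of a separated matching `M` forms a
`k⁷`-⋄-pattern, then `M` contains a `k`-thick pattern. -/
theorem diamond_contains_thick_pattern (M : OGraph) (k : ℕ)
    (hmatch : M.IsMatching) (hsep : M.Separated)
    (hdiam : M.FormsDiamond (k ^ 7)) :
    M.HasThickPattern k := by
  obtain ⟨ee, hinj, hup, hdown, hEeq⟩ := hdiam
  have hmem : ∀ i j, ee i j ∈ M.E := by
    intro i j
    rw [hEeq]
    exact Finset.mem_image.mpr ⟨(i, j), Finset.mem_univ _, rfl⟩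
  rcases Nat.lt_or_ge k 2 with hk | hk
  · interval_cases k
    · exact Or.inl ⟨fun i => i.elim0, fun i => i.elim0,
        fun a b _ => a.1.elim0, fun i => i.elim0, fun i => i.elim0⟩
    · refine Or.inl ⟨fun _ _ => ee ⟨0, by norm_num⟩ ⟨0, by norm_num⟩,
        fun _ _ => hmem _ _, ?_, ?_, ?_⟩
      · intro a b _
        exact Subsingleton.elim a b
      · intro i j j' hne
        exact absurd (Subsingleton.elim j j') hne
      · intro i i' j j' hne
        exact absurd (Subsingleton.elim i i') hne
  · obtain ⟨ts, hts⟩ := hsep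
    let C : DCfg M k := ⟨ee, hk, hinj, hup, hdown, hmem, ts, hts, hmatch⟩
    by_cases htw : ∃ p, C.Valid p ∧ k ≤ C.T p
    · obtain ⟨p, hv, hT⟩ := htw
      exact Or.inl (C.twist_of_T hv hT)
    · push_neg at htw
      have hno : ∀ p, C.Valid p → C.T p ≤ k - 1 := by
        intro p hp
        have := htw p hp
        omega
      exact Or.inr (C.rainbow_of_no_twist hno)

end MixedLayouts
end

section
/- For every k ≥ 2 the following holds: if 𝒫 is a set of patterns such that for every ordered matching M one has mn(M) ≤ k if and only if M avoids every pattern in 𝒫, then 𝒫 is infinite. -/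
/-!
Suppose `𝒫` were finite, with every pattern on at most `N` vertices, and let `m = k(N+2)+1`.
The ordered matching `obstruction k m` consists of `m` chords whose crossing graph is the
`(k-1)`-st power of the `m`-cycle, followed by a `(k+1)`-thick `k`-twist. The twist rules out
every layout on `k` pages that uses a queue, and the cycle power is not `k`-colourable because
`k ∤ m`; hence `mn > k` and the matching contains some `H ∈ 𝒫`. The edges at a copy of `H` are
at most `N < m`, so they miss one chord. The other chords can then be coloured with period `k`
along the path left over (here `m ≡ 1 mod k` is used), so these edges form an ordered matching with
a `k`-stack layout that still contains `H`, contradicting the characterisation.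
-/

namespace MixedLayouts

open Finset

section EdgeRelations

variable {n : ℕ} {e f : Fin n × Fin n}

theorem Cross.symm (h : Cross e f) : Cross f e := by
  unfold Cross at *; tauto

theorem not_cross_self (e : Fin n × Fin n) : ¬ Cross e e := by
  simp only [Cross, Fin.lt_def]; omega

theorem not_nest_self (e : Fin n × Fin n) : ¬ Nest e e := by
  simp only [Nest, Fin.lt_def]; omega

theorem Nest.not_cross (h : Nest e f) : ¬ Cross e f := by
  simp only [Nest, Cross, Fin.lt_def] at *; omega

theorem not_cross_of_snd_lt_fst (h : e.2 < f.1) : ¬ Cross e f := by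
  simp only [Cross, Fin.lt_def] at *; omega

variable {m : ℕ} {φ : Fin m → Fin n}

theorem cross_map_iff (hφ : StrictMono φ) (e f : Fin m × Fin m) :
    Cross (φ e.1, φ e.2) (φ f.1, φ f.2) ↔ Cross e f := by
  simp only [Cross, hφ.lt_iff_lt]

theorem nest_map_iff (hφ : StrictMono φ) (e f : Fin m × Fin m) :
    Nest (φ e.1, φ e.2) (φ f.1, φ f.2) ↔ Nest e f := by
  simp only [Nest, hφ.lt_iff_lt]

end EdgeRelations

def sortedPair {n : ℕ} (a b : Fin n) : Fin n × Fin n := (min a b, max a b)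

theorem sortedPair_of_lt {n : ℕ} {a b : Fin n} (h : a < b) : sortedPair a b = (a, b) := by
  simp [sortedPair, h.le]

theorem sortedPair_incident_iff {n : ℕ} {a b v : Fin n} :
    (sortedPair a b).1 = v ∨ (sortedPair a b).2 = v ↔ a = v ∨ b = v := by
  rcases le_total a b with h | h <;> simp [sortedPair, h, or_comm]

section

variable {ι : Type*} {n : ℕ} {p q : ι → Fin n}

theorem eq_of_incident_of_injective (h : Function.Injective (Sum.elim p q)) {i j : ι} {v : Fin n}
    (hi : p i = v ∨ q i = v) (hj : p j = v ∨ q j = v) : i = j := by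
  rcases hi with hi | hi <;> rcases hj with hj | hj
  · exact Sum.inl_injective (h (a₁ := .inl i) (a₂ := .inl j) (hi.trans hj.symm))
  · exact absurd (h (a₁ := .inl i) (a₂ := .inr j) (hi.trans hj.symm)) Sum.inl_ne_inr
  · exact absurd (h (a₁ := .inr i) (a₂ := .inl j) (hi.trans hj.symm)) Sum.inr_ne_inl
  · exact Sum.inr_injective (h (a₁ := .inr i) (a₂ := .inr j) (hi.trans hj.symm))

theorem injective_sortedPair (h : Function.Injective (Sum.elim p q)) :
    Function.Injective fun i => sortedPair (p i) (q i) := by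
  intro i j hij
  refine eq_of_incident_of_injective h (Or.inl rfl) (sortedPair_incident_iff.1 ?_)
  rw [← show sortedPair (p i) (q i) = sortedPair (p j) (q j) from hij]
  exact sortedPair_incident_iff.2 (Or.inl rfl)

end

theorem mod_eq_ite {x m : ℕ} (h : x < 2 * m) : x % m = if x < m then x else x - m := by
  split_ifs with hx
  · exact Nat.mod_eq_of_lt hx
  · rw [Nat.mod_eq_sub_mod (by omega), Nat.mod_eq_of_lt (by omega)]

/-- `i` and `j` are at distance less than `k` on the cycle `ℤ/m` (for `i, j < m`). -/
def CyclicallyClose (k m i j : ℕ) : Prop :=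
  (i < j + k ∧ j < i + k) ∨ i + m < j + k ∨ j + m < i + k

theorem CyclicallyClose.symm {k m i j : ℕ} (h : CyclicallyClose k m i j) :
    CyclicallyClose k m j i := by
  unfold CyclicallyClose at *; omega

/-- The arcs `{i, i+1, …, i+k-1} mod m` starting at the points of `A` are pairwise disjoint. -/
theorem card_mul_le_of_pairwise_not_cyclicallyClose {k m : ℕ} (hkm : k ≤ m) {A : Finset (Fin m)}
    (hfar : ∀ i ∈ A, ∀ j ∈ A, i ≠ j → ¬ CyclicallyClose k m i j) : #A * k ≤ m := by
  have hinj : Set.InjOn (fun x : Fin m × ℕ => (x.1 + x.2) % m) ↑(A ×ˢ range k) := by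
    rintro ⟨i, a⟩ hx ⟨j, b⟩ hy hij
    simp only [mem_coe, mem_product, mem_range] at hx hy
    dsimp only at hij
    rw [mod_eq_ite (by omega), mod_eq_ite (by omega)] at hij
    by_cases h : i = j
    · subst h
      split_ifs at hij <;> simp only [Prod.mk.injEq, true_and] <;> omega
    · have hfar' := hfar i hx.1 j hy.1 h
      have := Fin.val_ne_of_ne h
      unfold CyclicallyClose at hfar'
      split_ifs at hij <;> omega
  have hmaps : Set.MapsTo (fun x : Fin m × ℕ => (x.1 + x.2) % m) ↑(A ×ˢ range k) ↑(range m) :=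
    fun x _ => by simpa using Nat.mod_lt _ (by have := x.1.pos; omega)
  simpa using card_le_card_of_injOn _ hmaps hinj

/-- Colour the points of the cycle `ℤ/m` periodically with period `k`, walking around the cycle
from the point right after `v₀`. -/
def pathColor (k m v₀ i : ℕ) : ℕ := (i + (m - 1 - v₀)) % m % k

/-- Two points of `{0, …, m-2}` at cyclic distance `< k` differ by a nonzero amount that is less
than `k` or lies strictly between `m - k` and `m - 1`; no multiple of `k` does, as `m ≡ 1 mod k`. -/
theorem mod_ne_mod_of_cyclicallyClose {k m a b : ℕ} (hm : m % k = 1) (ha : a + 1 < m)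
    (hb : b + 1 < m) (hab : a ≠ b) (h : CyclicallyClose k m a b) : a % k ≠ b % k := by
  wlog hlt : a < b generalizing a b
  · exact (this hb ha hab.symm h.symm (by omega)).symm
  intro hmod
  obtain ⟨d, hd⟩ := (Nat.modEq_iff_dvd' hlt.le).1 hmod
  have hdiv := Nat.div_add_mod m k
  rcases Nat.lt_or_ge d (m / k) with hd' | hd'
  · have := Nat.mul_le_mul_left k (show d + 1 ≤ m / k by omega)
    have : k * (d + 1) = k * d + k := by ring
    rcases Nat.eq_zero_or_pos d with rfl | hpos
    · omega
    · have := Nat.mul_le_mul_left k hpos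
      unfold CyclicallyClose at h; omega
  · have := Nat.mul_le_mul_left k hd'
    unfold CyclicallyClose at h; omega

theorem pathColor_ne {k m v₀ i j : ℕ} (hm : m % k = 1) (hv₀ : v₀ < m) (hi : i < m) (hj : j < m)
    (hiv : i ≠ v₀) (hjv : j ≠ v₀) (hij : i ≠ j) (h : CyclicallyClose k m i j) :
    pathColor k m v₀ i ≠ pathColor k m v₀ j := by
  have hi' := mod_eq_ite (m := m) (x := i + (m - 1 - v₀)) (by omega)
  have hj' := mod_eq_ite (m := m) (x := j + (m - 1 - v₀)) (by omega)
  apply mod_ne_mod_of_cyclicallyClose hm <;> unfold CyclicallyClose at * <;>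
    split_ifs at hi' hj' <;> omega

namespace OGraph

section Layouts

variable {G H : OGraph} {k s q t : ℕ}

theorem hasLayout_mul_self (G : OGraph) : G.HasLayout (G.n * G.n) 0 := by
  refine ⟨fun e => finProdFinEquiv e, fun e _ => (finProdFinEquiv e).isLt, fun e _ f _ hef => ?_⟩
  obtain rfl := finProdFinEquiv.injective (Fin.ext hef)
  exact ⟨fun _ => not_cross_self e, fun _ => not_nest_self e⟩

theorem mn_le_of_hasLayout (h : G.HasLayout s q) : G.mn ≤ s + q :=
  Nat.sInf_le ⟨s, q, rfl, h⟩

theorem lt_mn_of_forall_not_hasLayout (h : ∀ s q, s + q ≤ k → ¬ G.HasLayout s q) :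
    k < G.mn := by
  have hne : {m | ∃ s q, s + q = m ∧ G.HasLayout s q}.Nonempty :=
    ⟨_, _, _, rfl, G.hasLayout_mul_self⟩
  obtain ⟨s, q, hsq, hG⟩ := Nat.sInf_mem hne
  by_contra! hle
  exact h s q (hsq.trans_le hle) hG

theorem HasLayout.of_contains (hGH : Contains G H) (h : G.HasLayout s q) : H.HasLayout s q := by
  obtain ⟨φ, hφ, hE⟩ := hGH
  obtain ⟨c, hc, hvalid⟩ := h
  refine ⟨fun e => c (φ e.1, φ e.2), fun e he => hc _ (hE e he), fun e he f hf hef => ?_⟩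
  simpa only [cross_map_iff hφ, nest_map_iff hφ] using hvalid _ (hE e he) _ (hE f hf) hef

/-- A group of `t` pairwise nesting edges cannot fit into `q < t` queues, so every group of the
twist has an edge on a stack; these `k` edges pairwise cross, so they need `k` stacks. -/
theorem HasThickTwist.not_hasLayout (h : G.HasThickTwist k t) (hs : s < k) (hq : q < t) :
    ¬ G.HasLayout s q := by
  rintro ⟨c, hc, hvalid⟩
  obtain ⟨e, he, -, hnest, hcross⟩ := h
  have hstack : ∀ i, ∃ j, c (e i j) < s := by
    intro i
    by_contra! hqueue
    obtain ⟨j, j', hjj', hc'⟩ := Fintype.exists_ne_map_eq_of_card_lt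
      (fun j => (⟨c (e i j) - s, by have := hc _ (he i j); have := hqueue j; omega⟩ : Fin q))
      (by simpa using hq)
    have hpage : c (e i j) = c (e i j') := by
      have := hqueue j; have := hqueue j'; simp only [Fin.mk.injEq] at hc'; omega
    exact (hvalid _ (he i j) _ (he i j') hpage).2 (hqueue j) (hnest i j j' hjj')
  choose j hj using hstack
  obtain ⟨i, i', hii', hc'⟩ := Fintype.exists_ne_map_eq_of_card_lt
    (fun i => (⟨c (e i (j i)), hj i⟩ : Fin s)) (by simpa using hs)
  exact (hvalid _ (he _ _) _ (he _ _) (Fin.mk.inj_iff.1 hc')).1 (hj i)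
    (hcross i i' _ _ hii')

/-- A stack meets the edges `y i` in an independent set of the `(k-1)`-st power of the `m`-cycle,
which has at most `m / k` elements; as `k ∤ m`, `k` stacks cannot cover all `m` of them. -/
theorem not_hasLayout_of_cyclicallyClose {m : ℕ} (hkm : k ≤ m) (hdvd : ¬ k ∣ m)
    (y : Fin m → Fin G.n × Fin G.n) (hy : ∀ i, y i ∈ G.E)
    (hcross : ∀ i j : Fin m, i ≠ j → CyclicallyClose k m i j → Cross (y i) (y j)) :
    ¬ G.HasLayout k 0 := by
  rintro ⟨c, hc, hvalid⟩
  have hk : 0 < k := Nat.pos_of_ne_zero fun hk => by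
    subst hk
    have hm : 0 < m := Nat.pos_of_ne_zero fun hm => hdvd (by simp [hm])
    exact absurd (hc _ (hy ⟨0, hm⟩)) (Nat.not_lt_zero _)
  let page (p : ℕ) : Finset (Fin m) := univ.filter fun i => c (y i) = p
  have hpage : ∀ p, #(page p) ≤ m / k := by
    intro p
    rw [Nat.le_div_iff_mul_le hk]
    refine card_mul_le_of_pairwise_not_cyclicallyClose hkm fun i hi j hj hij hclose => ?_
    simp only [page, mem_filter, mem_univ, true_and] at hi hj
    have := hc _ (hy i)
    exact (hvalid _ (hy i) _ (hy j) (hi.trans hj.symm)).1 (by omega) (hcross i j hij hclose)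
  have hcover : univ ⊆ (range k).biUnion page := by
    intro i _
    have := hc _ (hy i)
    simp only [mem_biUnion, mem_range, page, mem_filter, mem_univ, true_and]
    exact ⟨_, by omega, rfl⟩
  have := (card_le_card hcover).trans (card_biUnion_le_card_mul _ _ _ fun p _ => hpage p)
  rw [card_univ, Fintype.card_fin, card_range] at this
  exact Nat.mul_div_lt_iff_not_dvd.2 hdvd |>.not_ge this

theorem hasLayout_of_coloring {ι : Type*} (edge : ι → Fin G.n × Fin G.n)
    (hedge : Function.Injective edge) (hE : ∀ e ∈ G.E, ∃ i, edge i = e) (c : ι → ℕ)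
    (hc : ∀ i, edge i ∈ G.E → c i < s)
    (hvalid : ∀ i j, edge i ∈ G.E → edge j ∈ G.E → c i = c j → ¬ Cross (edge i) (edge j)) :
    G.HasLayout s 0 := by
  refine ⟨Function.extend edge c 0, fun e he => ?_, fun e he f hf hef => ?_⟩
  · obtain ⟨i, rfl⟩ := hE e he
    simpa [hedge.extend_apply] using hc i he
  · obtain ⟨i, rfl⟩ := hE e he
    obtain ⟨j, rfl⟩ := hE f hf
    simp only [hedge.extend_apply] at hef ⊢
    have := hc i he
    exact ⟨fun _ => hvalid i j he hf hef, fun h => absurd h (by omega)⟩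

end Layouts

section Matchings

variable {G H : OGraph} {v : Fin G.n}

theorem degree_pos_iff : 0 < G.degree v ↔ ∃ e ∈ G.E, e.1 = v ∨ e.2 = v := by
  simp only [degree, card_pos, filter_nonempty_iff]

theorem degree_le_one_iff : G.degree v ≤ 1 ↔
    ∀ e ∈ G.E, ∀ f ∈ G.E, (e.1 = v ∨ e.2 = v) → (f.1 = v ∨ f.2 = v) → e = f := by
  simp only [degree, card_le_one, mem_filter, and_imp]
  exact ⟨fun h e he f hf hev hfv => h e he hev f hf hfv,
    fun h e he hev f hf hfv => h e he f hf hev hfv⟩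

theorem isMatching_iff : G.IsMatching ↔ ∀ v, 0 < G.degree v ∧ G.degree v ≤ 1 :=
  forall_congr' fun _ => by omega

abbrev touching (G : OGraph) (T : Finset (Fin G.n)) : OGraph :=
  ⟨G.n, G.E.filter fun e => e.1 ∈ T ∨ e.2 ∈ T,
    fun e he => G.lt_of_mem e (mem_filter.1 he).1⟩

theorem mem_touching {T : Finset (Fin G.n)} {e : Fin G.n × Fin G.n} :
    e ∈ (G.touching T).E ↔ e ∈ G.E ∧ (e.1 ∈ T ∨ e.2 ∈ T) :=
  mem_filter

theorem card_touching_le (hG : G.IsMatching) (T : Finset (Fin G.n)) :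
    #(G.touching T).E ≤ #T := by
  have hsub : (G.touching T).E ⊆
      T.biUnion fun v => G.E.filter fun e => e.1 = v ∨ e.2 = v := by
    intro e he
    simp only [mem_filter, mem_biUnion] at he ⊢
    rcases he with ⟨he, h | h⟩
    exacts [⟨_, h, he, Or.inl rfl⟩, ⟨_, h, he, Or.inr rfl⟩]
  simpa using (card_le_card hsub).trans (card_biUnion_le_card_mul _ _ 1 fun v _ => (hG v).le)

theorem degree_touching_le (T : Finset (Fin G.n)) (v : Fin G.n) :
    (G.touching T).degree v ≤ G.degree v :=
  card_le_card fun _ he =>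
    mem_filter.2 ⟨(mem_touching.1 (mem_filter.1 he).1).1, (mem_filter.1 he).2⟩

def support (G : OGraph) : Finset (Fin G.n) :=
  G.E.biUnion fun e => {e.1, e.2}

theorem mem_support : v ∈ G.support ↔ ∃ e ∈ G.E, e.1 = v ∨ e.2 = v := by
  simp only [support, mem_biUnion, mem_insert, mem_singleton, eq_comm]

def deleteIsolated (G : OGraph) : OGraph where
  n := #G.support
  E := univ.filter fun a =>
    (G.support.orderEmbOfFin rfl a.1, G.support.orderEmbOfFin rfl a.2) ∈ G.E
  lt_of_mem _ ha := (G.support.orderEmbOfFin rfl).lt_iff_lt.1 (G.lt_of_mem _ (mem_filter.1 ha).2)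

theorem contains_deleteIsolated (G : OGraph) : Contains G G.deleteIsolated :=
  ⟨_, (G.support.orderEmbOfFin rfl).strictMono, fun _ ha => (mem_filter.1 ha).2⟩

theorem isMatching_deleteIsolated (hG : ∀ v, G.degree v ≤ 1) : G.deleteIsolated.IsMatching := by
  have hrange : ∀ {v}, v ∈ G.support → ∃ a, G.support.orderEmbOfFin rfl a = v := fun hv => by
    rwa [← Set.mem_range, range_orderEmbOfFin]
  refine isMatching_iff.2 fun w => ⟨?_, ?_⟩
  · obtain ⟨⟨x, y⟩, he, hev⟩ := mem_support.1 (G.support.orderEmbOfFin_mem rfl w)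
    obtain ⟨a, rfl⟩ := hrange (mem_support.2 ⟨_, he, Or.inl rfl⟩)
    obtain ⟨b, rfl⟩ := hrange (mem_support.2 ⟨_, he, Or.inr rfl⟩)
    exact degree_pos_iff.2 ⟨(a, b), mem_filter.2 ⟨mem_univ _, he⟩,
      hev.imp (fun h => (G.support.orderEmbOfFin rfl).injective h)
        (fun h => (G.support.orderEmbOfFin rfl).injective h)⟩
  · refine degree_le_one_iff.2 fun e he f hf hew hfw => ?_
    have h := degree_le_one_iff.1 (hG (G.support.orderEmbOfFin rfl w)) _ (mem_filter.1 he).2 _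
      (mem_filter.1 hf).2
      (hew.imp (congrArg (G.support.orderEmbOfFin rfl)) (congrArg (G.support.orderEmbOfFin rfl)))
      (hfw.imp (congrArg (G.support.orderEmbOfFin rfl)) (congrArg (G.support.orderEmbOfFin rfl)))
    simp only [Prod.mk.injEq, EmbeddingLike.apply_eq_iff_eq] at h
    exact Prod.ext h.1 h.2

theorem contains_deleteIsolated_of_mem_support {φ : Fin H.n → Fin G.n} (hφ : StrictMono φ)
    (hE : ∀ e ∈ H.E, (φ e.1, φ e.2) ∈ G.E) (hsupp : ∀ v, φ v ∈ G.support) :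
    Contains G.deleteIsolated H := by
  let ψ (v : Fin H.n) : Fin G.deleteIsolated.n :=
    (G.support.orderIsoOfFin rfl).symm ⟨φ v, hsupp v⟩
  have hψ : ∀ v, G.support.orderEmbOfFin rfl (ψ v) = φ v := fun v => by
    rw [← coe_orderIsoOfFin_apply, OrderIso.apply_symm_apply]
  refine ⟨ψ, fun a b hab => ?_, fun e he => mem_filter.2 ⟨mem_univ _, ?_⟩⟩
  · exact (G.support.orderEmbOfFin rfl).lt_iff_lt.1 (by rw [hψ, hψ]; exact hφ hab)
  · simpa only [hψ] using hE e he

theorem contains_deleteIsolated_touching (hG : G.IsMatching) {φ : Fin H.n → Fin G.n}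
    (hφ : StrictMono φ) (hE : ∀ e ∈ H.E, (φ e.1, φ e.2) ∈ G.E) :
    Contains (G.touching (univ.image φ)).deleteIsolated H := by
  refine contains_deleteIsolated_of_mem_support hφ (fun e he => ?_) fun v => ?_
  · exact mem_touching.2 ⟨hE e he, Or.inl (mem_image_of_mem _ (mem_univ _))⟩
  · obtain ⟨e, he, hev⟩ := degree_pos_iff.1 (hG (φ v)).ge
    refine mem_support.2 ⟨e, mem_touching.2 ⟨he, ?_⟩, hev⟩
    rcases hev with h | h <;> simp [h]

theorem isMatching_deleteIsolated_touching (hG : G.IsMatching) (T : Finset (Fin G.n)) :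
    (G.touching T).deleteIsolated.IsMatching :=
  isMatching_deleteIsolated fun v => (degree_touching_le T v).trans (hG v).le

variable {ι : Type*} {n : ℕ} {p q : ι → Fin n}

abbrev ofEndpoints [Fintype ι] (p q : ι → Fin n) (hpq : ∀ i, p i ≠ q i) : OGraph where
  n := n
  E := univ.image fun i => sortedPair (p i) (q i)
  lt_of_mem := by
    simp only [mem_image, mem_univ, true_and, forall_exists_index, forall_apply_eq_imp_iff]
    exact fun i => min_lt_max.2 (hpq i)

theorem mem_ofEndpoints [Fintype ι] {hpq : ∀ i, p i ≠ q i} {e : Fin n × Fin n} :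
    e ∈ (ofEndpoints p q hpq).E ↔ ∃ i, sortedPair (p i) (q i) = e := by
  simp only [mem_image, mem_univ, true_and]

theorem isMatching_ofEndpoints [Fintype ι] {hpq : ∀ i, p i ≠ q i}
    (h : Function.Bijective (Sum.elim p q)) :
    (ofEndpoints p q hpq).IsMatching := by
  refine isMatching_iff.2 fun v => ⟨degree_pos_iff.2 ?_, degree_le_one_iff.2 ?_⟩
  · obtain ⟨i | i, hi⟩ := h.2 v
    exacts [⟨_, mem_ofEndpoints.2 ⟨i, rfl⟩, sortedPair_incident_iff.2 (Or.inl hi)⟩,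
      ⟨_, mem_ofEndpoints.2 ⟨i, rfl⟩, sortedPair_incident_iff.2 (Or.inr hi)⟩]
  · intro e he f hf hev hfv
    obtain ⟨i, rfl⟩ := mem_ofEndpoints.1 he
    obtain ⟨j, rfl⟩ := mem_ofEndpoints.1 hf
    rw [eq_of_incident_of_injective h.1 (sortedPair_incident_iff.1 hev)
      (sortedPair_incident_iff.1 hfv)]

end Matchings

end OGraph

open OGraph

theorem castAdd_ne_natAdd {a b : ℕ} (x : Fin a) (y : Fin b) : Fin.castAdd b x ≠ Fin.natAdd a y :=
  fun h => by have := x.isLt; rw [Fin.ext_iff, Fin.val_castAdd, Fin.val_natAdd] at h; omega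

namespace Obstruction

variable (k m : ℕ)

/-- Chord `i` joins the points `2i` and `2i + 2k - 1` of a cycle of `2m` points cut open between
`2m - 1` and `0`; two chords cross iff their indices are at cyclic distance `< k`. -/
def chordStart (i : Fin m) : Fin (2 * m) := ⟨2 * i, by omega⟩

def chordEnd (i : Fin m) : Fin (2 * m) :=
  ⟨(2 * i + (2 * k - 1)) % (2 * m), Nat.mod_lt _ (by have := i.pos; omega)⟩

/-- Edge `(g, r)` is the `r`-th edge of the `g`-th group of a `(k+1)`-thick `k`-twist. -/
def twistStart (x : Fin k × Fin (k + 1)) : Fin (k * (k + 1) + k * (k + 1)) :=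
  Fin.castAdd _ (finProdFinEquiv x)

def twistEnd (x : Fin k × Fin (k + 1)) : Fin (k * (k + 1) + k * (k + 1)) :=
  Fin.natAdd _ (finProdFinEquiv (Prod.map id Fin.rev x))

def endpointA : Fin m ⊕ Fin k × Fin (k + 1) → Fin (2 * m + (k * (k + 1) + k * (k + 1))) :=
  Sum.elim (fun i => Fin.castAdd _ (chordStart m i)) fun x => Fin.natAdd _ (twistStart k x)

def endpointB : Fin m ⊕ Fin k × Fin (k + 1) → Fin (2 * m + (k * (k + 1) + k * (k + 1))) :=
  Sum.elim (fun i => Fin.castAdd _ (chordEnd k m i)) fun x => Fin.natAdd _ (twistEnd k x)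

def edge (x : Fin m ⊕ Fin k × Fin (k + 1)) :
    Fin (2 * m + (k * (k + 1) + k * (k + 1))) × Fin (2 * m + (k * (k + 1) + k * (k + 1))) :=
  sortedPair (endpointA k m x) (endpointB k m x)

theorem chordEnd_injective : Function.Injective (chordEnd k m) := by
  intro i j h
  have h' : 2 * i + (2 * k - 1) ≡ 2 * j + (2 * k - 1) [MOD 2 * m] := Fin.val_eq_of_eq h
  have := (Nat.ModEq.add_right_cancel' _ h').mul_left_cancel' two_ne_zero
  exact Fin.ext (by rwa [Nat.ModEq, Nat.mod_eq_of_lt i.2, Nat.mod_eq_of_lt j.2] at this)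

theorem chordStart_ne_chordEnd [NeZero k] (i j : Fin m) : chordStart m i ≠ chordEnd k m j := by
  intro h
  have := congrArg (fun x : Fin (2 * m) => (x : ℕ) % 2) h
  simp only [chordStart, chordEnd, Nat.mod_mod_of_dvd _ (dvd_mul_right 2 m)] at this
  have := NeZero.pos k
  omega

theorem endpointA_ne_endpointB [NeZero k] (x y : Fin m ⊕ Fin k × Fin (k + 1)) :
    endpointA k m x ≠ endpointB k m y := by
  rcases x with i | x <;> rcases y with j | y
  · exact (Fin.castAdd_injective _ _).ne (chordStart_ne_chordEnd k m i j)
  · exact castAdd_ne_natAdd _ _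
  · exact (castAdd_ne_natAdd _ _).symm
  · exact (Fin.natAdd_injective _ _).ne (castAdd_ne_natAdd _ _)

theorem injective_endpoints [NeZero k] :
    Function.Injective (Sum.elim (endpointA k m) (endpointB k m)) := by
  refine .sumElim ?_ ?_ (endpointA_ne_endpointB k m)
  · refine .sumElim ((Fin.castAdd_injective _ _).comp fun i j h => ?_)
      ((Fin.natAdd_injective _ _).comp ((Fin.castAdd_injective _ _).comp finProdFinEquiv.injective))
      fun _ _ => castAdd_ne_natAdd _ _
    exact Fin.ext (by simpa [chordStart] using h)
  · exact .sumElim ((Fin.castAdd_injective _ _).comp (chordEnd_injective k m))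
      ((Fin.natAdd_injective _ _).comp ((Fin.natAdd_injective _ _).comp
        (finProdFinEquiv.injective.comp (Function.injective_id.prodMap Fin.rev_injective))))
      fun _ _ => castAdd_ne_natAdd _ _

end Obstruction

open Obstruction

abbrev obstruction (k m : ℕ) [NeZero k] : OGraph :=
  ofEndpoints (endpointA k m) (endpointB k m) fun x => endpointA_ne_endpointB k m x x

variable {k m : ℕ}

theorem isMatching_obstruction [NeZero k] : (obstruction k m).IsMatching := by
  unfold obstruction
  exact isMatching_ofEndpoints <| (Fintype.bijective_iff_injective_and_card _).2
    ⟨injective_endpoints k m, by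
      simp only [Fintype.card_sum, Fintype.card_prod, Fintype.card_fin]; ring⟩

theorem edge_mem_obstruction [NeZero k] (x : Fin m ⊕ Fin k × Fin (k + 1)) :
    edge k m x ∈ (obstruction k m).E := by
  unfold obstruction
  exact mem_ofEndpoints.2 ⟨x, rfl⟩

namespace Obstruction

theorem edge_injective [NeZero k] : Function.Injective (edge k m) :=
  injective_sortedPair (injective_endpoints k m)

theorem edge_inr (x : Fin k × Fin (k + 1)) :
    edge k m (.inr x) = (Fin.natAdd _ (twistStart k x), Fin.natAdd _ (twistEnd k x)) :=
  sortedPair_of_lt <| (Fin.strictMono_natAdd _).lt_iff_lt.2 <| by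
    simp only [twistStart, twistEnd, Fin.lt_def, Fin.val_castAdd, Fin.val_natAdd]; omega

theorem nest_twist (g : Fin k) {r r' : Fin (k + 1)} (h : r ≠ r') :
    Nest (edge k m (.inr (g, r))) (edge k m (.inr (g, r'))) := by
  have := Fin.val_ne_of_ne h
  simp only [Nest, edge_inr, twistStart, twistEnd, Fin.lt_def, Fin.val_natAdd, Fin.val_castAdd,
    finProdFinEquiv_apply_val, Prod.map_fst, Prod.map_snd, id, Fin.val_rev]
  omega

theorem cross_twist {g g' : Fin k} (h : g ≠ g') (r r' : Fin (k + 1)) :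
    Cross (edge k m (.inr (g, r))) (edge k m (.inr (g', r'))) := by
  have hlt : ∀ {a b : ℕ}, a < b → (k + 1) * a + (k + 1) ≤ (k + 1) * b := fun hab => by
    rw [← Nat.mul_succ]; exact Nat.mul_le_mul_left _ hab
  have := hlt g.isLt
  have := hlt g'.isLt
  simp only [Cross, edge_inr, twistStart, twistEnd, Fin.lt_def, Fin.val_natAdd, Fin.val_castAdd,
    finProdFinEquiv_apply_val, Prod.map_fst, Prod.map_snd, id, Fin.val_rev]
  rcases lt_or_gt_of_ne h with hg | hg
  · have := hlt hg; rw [Nat.mul_comm k] at *; omega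
  · have := hlt hg; rw [Nat.mul_comm k] at *; omega

theorem hasThickTwist_obstruction [NeZero k] : (obstruction k m).HasThickTwist k (k + 1) :=
  ⟨fun g r => edge k m (.inr (g, r)), fun _ _ => edge_mem_obstruction _,
    edge_injective.comp Sum.inr_injective,
    fun g _ _ h => nest_twist g h, fun _ _ r r' h => cross_twist h r r'⟩

theorem cross_chord_iff [NeZero k] (hkm : 2 * k ≤ m) {i j : Fin m} (hij : i ≠ j) :
    Cross (edge k m (.inl i)) (edge k m (.inl j)) ↔ CyclicallyClose k m i j := by
  have := Fin.val_ne_of_ne hij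
  have := NeZero.pos k
  have hi := mod_eq_ite (m := 2 * m) (x := 2 * i + (2 * k - 1)) (by omega)
  have hj := mod_eq_ite (m := 2 * m) (x := 2 * j + (2 * k - 1)) (by omega)
  simp only [Cross, CyclicallyClose, edge, sortedPair, endpointA, endpointB, chordStart, chordEnd,
    Sum.elim_inl, Fin.lt_def, Fin.coe_min, Fin.coe_max, Fin.val_castAdd]
  split_ifs at hi hj <;> omega

theorem chord_snd_lt_twist_fst (i : Fin m) (x : Fin k × Fin (k + 1)) :
    (edge k m (.inl i)).2 < (edge k m (.inr x)).1 := by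
  rw [edge_inr]
  simp only [edge, sortedPair, endpointA, endpointB, Sum.elim_inl, Fin.lt_def, Fin.coe_max,
    Fin.val_castAdd, Fin.val_natAdd]
  omega

end Obstruction

theorem lt_mn_obstruction [NeZero k] (hkm : 2 * k ≤ m) (hm : m % k = 1) :
    k < (obstruction k m).mn := by
  refine lt_mn_of_forall_not_hasLayout fun s q hsq => ?_
  rcases Nat.lt_or_ge s k with hs | hs
  · exact hasThickTwist_obstruction.not_hasLayout hs (by omega)
  · obtain ⟨rfl, rfl⟩ : s = k ∧ q = 0 := by omega
    refine not_hasLayout_of_cyclicallyClose (by omega) (by simp [Nat.dvd_iff_mod_eq_zero, hm])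
      (fun i => edge s m (.inl i)) (fun _ => edge_mem_obstruction _)
      fun i j hij h => (cross_chord_iff hkm hij).2 h

/-- Some chord is missing; colour the other chords by `pathColor` from it on, and the `g`-th group
of the twist with colour `g`. -/
theorem hasLayout_touching_obstruction [NeZero k] (hkm : 2 * k ≤ m) (hm : m % k = 1)
    {T : Finset (Fin (obstruction k m).n)} (hT : #((obstruction k m).touching T).E < m) :
    ((obstruction k m).touching T).HasLayout k 0 := by
  obtain ⟨_, hv₀, hv₀T⟩ := exists_mem_notMem_of_card_lt_card
    (s := ((obstruction k m).touching T).E) (t := univ.image fun i : Fin m => edge k m (.inl i))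
    (by rwa [card_image_of_injective (s := univ) (f := fun i : Fin m => edge k m (.inl i))
      (edge_injective.comp Sum.inl_injective), card_univ, Fintype.card_fin])
  obtain ⟨v₀, -, rfl⟩ := mem_image.1 hv₀
  refine hasLayout_of_coloring (edge k m) edge_injective
    (fun e he => mem_ofEndpoints.1 (mem_touching.1 he).1)
    (Sum.elim (fun i => pathColor k m v₀ i) fun x => x.1) ?_ ?_
  · rintro (i | x) -
    exacts [Nat.mod_lt _ (NeZero.pos k), x.1.isLt]
  · rintro (i | ⟨g, r⟩) (j | ⟨g', r'⟩) hi hj hc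
    · by_cases hij : i = j
      · subst hij; exact not_cross_self _
      · have hne : ∀ {l : Fin m}, edge k m (.inl l) ∈ ((obstruction k m).touching T).E →
            (l : ℕ) ≠ v₀ := fun hl h => hv₀T (Fin.ext h ▸ hl)
        exact fun hcross => pathColor_ne hm v₀.isLt i.isLt j.isLt (hne hi) (hne hj)
          (Fin.val_ne_of_ne hij) ((cross_chord_iff hkm hij).1 hcross) hc
    · exact not_cross_of_snd_lt_fst (chord_snd_lt_twist_fst _ _)
    · exact fun h => not_cross_of_snd_lt_fst (chord_snd_lt_twist_fst _ _) h.symm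
    · obtain rfl : g = g' := Fin.ext hc
      by_cases hr : r = r'
      · subst hr; exact not_cross_self _
      · exact (nest_twist g hr).not_cross

theorem obstruction_set_infinite_general (k : ℕ) (hk : 2 ≤ k) (P : Set OGraph)
    (hchar : ∀ M : OGraph, M.IsMatching →
      (M.mn ≤ k ↔ ∀ H ∈ P, ¬ Contains M H)) :
    P.Infinite := by
  intro hP
  have : NeZero k := ⟨by omega⟩
  obtain ⟨N, hN⟩ := (hP.image OGraph.n).bddAbove
  obtain ⟨m, hkm, hm, hNm⟩ : ∃ m, 2 * k ≤ m ∧ m % k = 1 ∧ N < m :=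
    ⟨k * (N + 2) + 1, by nlinarith, by rw [Nat.mul_add_mod, Nat.mod_eq_of_lt hk], by nlinarith⟩
  obtain ⟨H, hHP, φ, hφ, hE⟩ : ∃ H ∈ P, Contains (obstruction k m) H := by
    by_contra! h
    exact (lt_mn_obstruction hkm hm).not_ge ((hchar _ isMatching_obstruction).2 h)
  have hsmall : #((obstruction k m).touching (univ.image φ)).E < m := calc
    _ ≤ #(univ.image φ) := card_touching_le isMatching_obstruction _
    _ ≤ H.n := card_image_le.trans (card_univ.trans (Fintype.card_fin _)).le
    _ ≤ N := hN ⟨H, hHP, rfl⟩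
    _ < m := hNm
  have hlayout := (hasLayout_touching_obstruction hkm hm hsmall).of_contains
    (contains_deleteIsolated _)
  exact (hchar _ (isMatching_deleteIsolated_touching isMatching_obstruction _)).1
    (mn_le_of_hasLayout hlayout) H hHP
    (contains_deleteIsolated_touching isMatching_obstruction hφ hE)

/-- For every `k ≥ 2`: if `𝒫` is a set of patterns such that
an ordered matching has mixed page number at most `k` iff it avoids every
pattern of `𝒫`, then `𝒫` is infinite. -/
theorem obstruction_set_infinite (k : ℕ) (hk : 2 ≤ k) (P : Set OGraph)
    (hpat : ∀ H ∈ P, H.E.Nonempty)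
    (hchar : ∀ M : OGraph, M.IsMatching →
      (M.mn ≤ k ↔ ∀ H ∈ P, ¬ Contains M H)) :
    P.Infinite :=
  obstruction_set_infinite_general k hk P hchar

end MixedLayouts
end
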